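/- arXiv:0806.2996 — 11 statements merged into one kernel-verified Lean document; each statement's English description precedes it below -/
import Mathlib

section
/- Let S be a commutative antiring and suppose 1 = a₁+...+a_k and 1 = b₁+...+b_r are two orthogonal decompositions of 1, with k maximal among lengths of orthogonal decompositions of 1. Then for each i there is exactly one index σ(i) with aᵢ·b_{σ(i)} ≠ 0, and moreover aᵢ·b_{σ(i)} = aᵢ. -/
/-- If `1 = a₁ + ... + a_k` is an orthogonal decomposition of 1 of maximal length and
`1 = b₁ + ... + b_r` is another orthogonal decomposition, then for each `i` there is
exactly one index `j` with `aᵢ * bⱼ ≠ 0`, and for this index `aᵢ * bⱼ = aᵢ`. -/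
theorem stmt_4 {S : Type*} [CommSemiring S]
    (hzs : ∀ a b : S, a + b = 0 → a = 0 ∧ b = 0)
    (k r : ℕ) (a : Fin k → S) (b : Fin r → S)
    (ha0 : ∀ i, a i ≠ 0) (haorth : ∀ i j, i ≠ j → a i * a j = 0) (hasum : ∑ i, a i = 1)
    (hb0 : ∀ i, b i ≠ 0) (hborth : ∀ i j, i ≠ j → b i * b j = 0) (hbsum : ∑ i, b i = 1)
    (hmax : ∀ (m : ℕ) (c : Fin m → S), (∀ i, c i ≠ 0) →
      (∀ i j, i ≠ j → c i * c j = 0) → (∑ i, c i = 1) → m ≤ k) :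
    ∀ i, ∃! j, a i * b j ≠ 0 ∧ a i * b j = a i := by
  classical
  intro i
  obtain ⟨n, rfl⟩ : ∃ n, k = n + 1 := ⟨k - 1, (Nat.succ_pred_eq_of_pos i.pos).symm⟩
  -- The set of indices j with a i * b j ≠ 0
  set T : Finset (Fin r) := Finset.univ.filter (fun m => a i * b m ≠ 0) with hT
  have hmemT : ∀ m, m ∈ T ↔ a i * b m ≠ 0 := by
    intro m; simp [hT]
  -- the total sum over all j of a i * b j equals a i
  have hsumall : ∑ m, a i * b m = a i := by
    rw [← Finset.mul_sum, hbsum, mul_one]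
  -- sum over T equals a i
  have hsumT : ∑ m ∈ T, a i * b m = a i := by
    conv_rhs => rw [← hsumall]
    refine Finset.sum_subset (Finset.subset_univ T) ?_
    intro x _ hx
    by_contra h
    exact hx ((hmemT x).2 h)
  -- T is nonempty
  have hTne : T.Nonempty := by
    rcases Finset.eq_empty_or_nonempty T with h | h
    · exfalso
      apply ha0 i
      rw [← hsumT, h, Finset.sum_empty]
    · exact h
  -- define the refined decomposition
  set t := T.card with ht
  set e := T.equivFin with he
  set g : Fin n ⊕ Fin t → S :=
    Sum.elim (fun l => a (i.succAbove l)) (fun m => a i * b (e.symm m)) with hg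
  set c : Fin (n + t) → S := fun x => g (finSumFinEquiv.symm x) with hc
  have hbmem : ∀ m : Fin t, (e.symm m : Fin r) ∈ T := fun m => (e.symm m).2
  have hc0 : ∀ x, c x ≠ 0 := by
    intro x
    show g (finSumFinEquiv.symm x) ≠ 0
    rcases h : finSumFinEquiv.symm x with l | m <;> simp only [hg, Sum.elim_inl, Sum.elim_inr]
    · exact ha0 _
    · exact (hmemT _).1 (hbmem m)
  have hcorth : ∀ x y, x ≠ y → c x * c y = 0 := by
    intro x y hxy
    show g (finSumFinEquiv.symm x) * g (finSumFinEquiv.symm y) = 0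
    have hxy' : finSumFinEquiv.symm x ≠ finSumFinEquiv.symm y := fun h => hxy (finSumFinEquiv.symm.injective h)
    rcases hx : finSumFinEquiv.symm x with l | m <;> rcases hy : finSumFinEquiv.symm y with l' | m' <;>
      simp only [hg, Sum.elim_inl, Sum.elim_inr]
    · have : i.succAbove l ≠ i.succAbove l' := by
        intro h
        apply hxy'
        rw [hx, hy, Fin.succAbove_right_injective h]
      exact haorth _ _ this
    · have h0 : a (i.succAbove l) * a i = 0 := haorth _ _ (Fin.succAbove_ne i l)
      calc a (i.succAbove l) * (a i * b (e.symm m')) = a (i.succAbove l) * a i * b (e.symm m') := by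
            ring
        _ = 0 := by rw [h0, zero_mul]
    · have h0 : a i * a (i.succAbove l') = 0 := haorth _ _ (Fin.succAbove_ne i l').symm
      calc a i * b (e.symm m) * (a (i.succAbove l')) = a i * a (i.succAbove l') * b (e.symm m) := by
            ring
        _ = 0 := by rw [h0, zero_mul]
    · have hmm : m ≠ m' := by
        intro h; apply hxy'; rw [hx, hy, h]
      have hne : (e.symm m : Fin r) ≠ (e.symm m' : Fin r) := by
        intro h
        exact hmm (e.symm.injective (Subtype.ext h))
      calc a i * b (e.symm m) * (a i * b (e.symm m')) =
          a i * a i * (b (e.symm m) * b (e.symm m')) := by ring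
        _ = 0 := by rw [hborth _ _ hne, mul_zero]
  have hcsum : ∑ x, c x = 1 := by
    have h1 : ∑ x, c x = ∑ y : Fin n ⊕ Fin t, g y := Equiv.sum_comp finSumFinEquiv.symm g
    rw [h1, Fintype.sum_sum_type]
    simp only [hg, Sum.elim_inl, Sum.elim_inr]
    have h2 : ∑ m : Fin t, a i * b (e.symm m) = ∑ x ∈ T, a i * b x := by
      rw [← Finset.sum_coe_sort T (fun x => a i * b x)]
      exact Equiv.sum_comp e.symm (fun x : T => a i * b x)
    rw [h2, hsumT]
    have h3 := Fin.sum_univ_succAbove a i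
    rw [← hasum, h3, add_comm]
  have hle : n + t ≤ n + 1 := hmax (n + t) c hc0 hcorth hcsum
  have ht1 : t = 1 := le_antisymm (by omega) (Finset.card_pos.2 hTne)
  obtain ⟨j, hj⟩ := Finset.card_eq_one.1 ht1
  have hjmem : a i * b j ≠ 0 := (hmemT j).1 (hj ▸ Finset.mem_singleton_self j)
  have hjeq : a i * b j = a i := by
    conv_rhs => rw [← hsumT]
    rw [hj, Finset.sum_singleton]
  exact ⟨j, ⟨hjmem, hjeq⟩, fun y hy => by
    have hyT : y ∈ T := (hmemT y).2 hy.1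
    rw [hj, Finset.mem_singleton] at hyT
    exact hyT⟩
end

section
/- Let S be a commutative antiring with maximal orthogonal decomposition of 1 given by 1 = a₁+...+a_k. If 1 = b₁+...+b_r is any orthogonal decomposition of 1, then each b_l is a sum of a subset of {a₁,...,a_k}; in particular r ≤ k. -/
/-- If `1 = a₁ + ... + a_k` is an orthogonal decomposition of 1 of maximal length and
`1 = b₁ + ... + b_r` is any orthogonal decomposition of 1, then each `b_l` is a sum of
a subset of the `aᵢ`, and `r ≤ k`. -/
theorem stmt_5 {S : Type*} [CommSemiring S]
    (hzs : ∀ a b : S, a + b = 0 → a = 0 ∧ b = 0)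
    (k r : ℕ) (a : Fin k → S) (b : Fin r → S)
    (ha0 : ∀ i, a i ≠ 0) (haorth : ∀ i j, i ≠ j → a i * a j = 0) (hasum : ∑ i, a i = 1)
    (hb0 : ∀ i, b i ≠ 0) (hborth : ∀ i j, i ≠ j → b i * b j = 0) (hbsum : ∑ i, b i = 1)
    (hmax : ∀ (m : ℕ) (c : Fin m → S), (∀ i, c i ≠ 0) →
      (∀ i j, i ≠ j → c i * c j = 0) → (∑ i, c i = 1) → m ≤ k) :
    (∀ l, ∃ T : Finset (Fin k), b l = ∑ i ∈ T, a i) ∧ r ≤ k := by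
  classical
  set P : Finset (Fin k × Fin r) :=
    Finset.univ.filter (fun p => a p.1 * b p.2 ≠ 0) with hP
  -- sum of all products is 1
  have hsum_univ : ∑ p : Fin k × Fin r, a p.1 * b p.2 = 1 := by
    rw [Fintype.sum_prod_type]
    simp only [← Finset.mul_sum, hbsum, mul_one, hasum]
  have hsumP : ∑ p ∈ P, a p.1 * b p.2 = 1 := by
    rw [hP, Finset.sum_filter_ne_zero, hsum_univ]
  -- the nonzero products form an orthogonal decomposition of 1
  have hPk : P.card ≤ k := by
    have e : Fin P.card ≃ P := P.equivFin.symm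
    refine hmax P.card (fun j => a (e j).1.1 * b (e j).1.2) ?_ ?_ ?_
    · intro j
      exact (Finset.mem_filter.mp (e j).2).2
    · intro j j' hjj'
      have hne : (e j).1 ≠ (e j').1 := by
        intro h
        exact hjj' (e.injective (Subtype.ext h))
      have : (e j).1.1 ≠ (e j').1.1 ∨ (e j).1.2 ≠ (e j').1.2 := by
        by_contra h
        push_neg at h
        exact hne (Prod.ext h.1 h.2)
      have key : a (e j).1.1 * b (e j).1.2 * (a (e j').1.1 * b (e j').1.2)
          = (a (e j).1.1 * a (e j').1.1) * (b (e j).1.2 * b (e j').1.2) := by ring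
      rcases this with h | h
      · rw [key, haorth _ _ h, zero_mul]
      · rw [key, hborth _ _ h, mul_zero]
    · rw [← hsumP]
      refine Finset.sum_bij (fun j _ => (e j).1) (fun j _ => (e j).2)
        (fun j _ j' _ h => e.injective (Subtype.ext h))
        (fun p hp => ⟨e.symm ⟨p, hp⟩, Finset.mem_univ _, by simp⟩)
        (fun j _ => rfl)
  -- fibers
  set F : Fin k → Finset (Fin r) := fun i => Finset.univ.filter (fun l => a i * b l ≠ 0)
    with hF
  have hPcard : P.card = ∑ i, (F i).card := by
    simp only [hP, hF, Finset.card_filter, Fintype.sum_prod_type]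
  have ha_eq : ∀ i, a i = ∑ l, a i * b l := by
    intro i
    rw [← Finset.mul_sum, hbsum, mul_one]
  have hF1 : ∀ i, 1 ≤ (F i).card := by
    intro i
    rw [Nat.one_le_iff_ne_zero, Ne, Finset.card_eq_zero]
    intro hFe
    apply ha0 i
    rw [ha_eq i]
    refine Finset.sum_eq_zero fun l _ => ?_
    by_contra h
    have : l ∈ F i := by rw [hF]; simp [h]
    rw [hFe] at this
    exact absurd this (Finset.notMem_empty l)
  have hcards : ∀ i, (F i).card = 1 := by
    intro i
    by_contra h
    have h2 : 2 ≤ (F i).card := by have := hF1 i; omega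
    have hlt : (k : ℕ) < ∑ i, (F i).card := by
      calc k = ∑ _i : Fin k, 1 := by simp
        _ < ∑ i, (F i).card :=
          Finset.sum_lt_sum (fun j _ => hF1 j) ⟨i, Finset.mem_univ i, by omega⟩
    omega
  -- choose the unique partner of each a i
  have hchoice : ∀ i, ∃ l, F i = {l} := fun i => Finset.card_eq_one.mp (hcards i)
  choose li hli using hchoice
  have hzero : ∀ i l, l ≠ li i → a i * b l = 0 := by
    intro i l hl
    by_contra h
    have : l ∈ F i := by rw [hF]; simp [h]
    rw [hli i] at this
    exact hl (Finset.mem_singleton.mp this)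
  have hfix : ∀ i, a i * b (li i) = a i := by
    intro i
    have : ∑ l, a i * b l = a i * b (li i) := by
      rw [← Finset.sum_filter_ne_zero]
      have : (Finset.univ.filter (fun l => a i * b l ≠ 0)) = {li i} := hli i
      rw [show (Finset.univ.filter (fun l => a i * b l ≠ 0)) = F i from rfl, hli i,
        Finset.sum_singleton]
    rw [← this, ← ha_eq i]
  -- b l is the sum over its fiber
  have hbl : ∀ l, b l = ∑ i ∈ Finset.univ.filter (fun i => li i = l), a i := by
    intro l
    have h1 : b l = ∑ i, a i * b l := by
      rw [← Finset.sum_mul, hasum, one_mul]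
    have h2 : ∑ i ∈ Finset.univ.filter (fun i => li i = l), a i * b l
        = ∑ i : Fin k, a i * b l :=
      Finset.sum_subset (Finset.filter_subset _ _)
        (fun i _ hi => by
          rw [Finset.mem_filter] at hi
          push_neg at hi
          exact hzero i l (fun h => hi (Finset.mem_univ i) h.symm))
    rw [h1, ← h2]
    refine Finset.sum_congr rfl fun i hi => ?_
    rw [Finset.mem_filter] at hi
    rw [← hi.2, hfix i]
  refine ⟨fun l => ⟨_, hbl l⟩, ?_⟩
  -- each fiber is nonempty, giving an injection Fin r → Fin k
  have hne : ∀ l, ∃ i, li i = l := by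
    intro l
    by_contra h
    push_neg at h
    apply hb0 l
    rw [hbl l]
    have : (Finset.univ.filter (fun i => li i = l)) = ∅ := by
      rw [Finset.filter_eq_empty_iff]
      exact fun {i} _ => h i
    rw [this, Finset.sum_empty]
  choose g hg using hne
  have hginj : Function.Injective g := by
    intro l l' h
    rw [← hg l, ← hg l', h]
  simpa using Fintype.card_le_of_injective g hginj
end

section
/- Let S be a commutative antiring and A an n×n matrix over S such that both A·Aᵀ and Aᵀ·A are invertible diagonal matrices. Then for each i and all j ≠ k, A(i,j)·A(i,k) = 0 and A(j,i)·A(k,i) = 0, and for each i the row sum lᵢ = Σ_k A(i,k) is an invertible element of S. -/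
/-!
Over a zerosumfree semiring a sum vanishes only if every summand does. The off-diagonal
entries of `Aᵀ * A` and `A * Aᵀ` are sums of products of two entries from one row, resp. one
column, so all such products vanish. Hence the square of the `i`-th row sum collapses to
`(A * Aᵀ) i i`, which is a unit because `A * Aᵀ` is an invertible diagonal matrix.
-/

open Matrix

theorem Finset.eq_zero_of_sum_eq_zero_of_zeroSumFree {ι M : Type*} [AddCommMonoid M]
    (hzs : ∀ a b : M, a + b = 0 → a = 0 ∧ b = 0) {s : Finset ι} {f : ι → M}
    (h : ∑ i ∈ s, f i = 0) : ∀ i ∈ s, f i = 0 := by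
  induction s using Finset.cons_induction with
  | empty => simp
  | cons a s ha ih =>
    rw [Finset.sum_cons] at h
    obtain ⟨hfa, hsum⟩ := hzs _ _ h
    simpa [hfa] using ih hsum

theorem Finset.sum_mul_sum_self_of_pairwise_mul_eq_zero {ι R : Type*} [NonUnitalNonAssocSemiring R]
    {s : Finset ι} {f : ι → R} (hf : ∀ j ∈ s, ∀ k ∈ s, j ≠ k → f j * f k = 0) :
    (∑ j ∈ s, f j) * (∑ k ∈ s, f k) = ∑ j ∈ s, f j * f j := by
  rw [Finset.sum_mul_sum]
  refine Finset.sum_congr rfl fun j hj => Finset.sum_eq_single_of_mem j hj fun k hk hkj => ?_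
  exact hf j hj k hk hkj.symm

namespace Matrix

variable {m n S : Type*} [Fintype m] [CommSemiring S]

theorem mul_entry_eq_zero_of_isDiag_transpose_mul
    (hzs : ∀ a b : S, a + b = 0 → a = 0 ∧ b = 0) {A : Matrix m n S} (hA : (Aᵀ * A).IsDiag)
    (i : m) {j k : n} (hjk : j ≠ k) : A i j * A i k = 0 := by
  have hsum : ∑ l, A l j * A l k = 0 := by simpa [mul_apply] using hA hjk
  exact Finset.eq_zero_of_sum_eq_zero_of_zeroSumFree hzs hsum i (Finset.mem_univ i)

theorem IsDiag.mul_apply_diag_eq_one [DecidableEq m] {D B : Matrix m m S} (hD : D.IsDiag)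
    (hDB : D * B = 1) (i : m) : D i i * B i i = 1 := by
  have hii := congrFun (congrFun hDB i) i
  rwa [← hD.diagonal_diag, diagonal_mul, one_apply_eq] at hii

end Matrix

theorem stmt_7_general {S : Type*} [CommSemiring S]
    (hzs : ∀ a b : S, a + b = 0 → a = 0 ∧ b = 0)
    (n : ℕ) (A : Matrix (Fin n) (Fin n) S)
    (hd1 : (A * Aᵀ).IsDiag) (hd2 : (Aᵀ * A).IsDiag)
    (hi1 : ∃ B, A * Aᵀ * B = 1 ∧ B * (A * Aᵀ) = 1) :
    (∀ i j k, j ≠ k → A i j * A i k = 0 ∧ A j i * A k i = 0) ∧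
    (∀ i, ∃ u : S, (∑ k, A i k) * u = 1) := by
  have hrow : ∀ i j k, j ≠ k → A i j * A i k = 0 := fun i j k hjk =>
    mul_entry_eq_zero_of_isDiag_transpose_mul hzs hd2 i hjk
  have hd1' : (Aᵀᵀ * Aᵀ).IsDiag := by rwa [transpose_transpose]
  refine ⟨fun i j k hjk =>
    ⟨hrow i j k hjk, mul_entry_eq_zero_of_isDiag_transpose_mul hzs hd1' i hjk⟩, fun i => ?_⟩
  obtain ⟨B, hB, -⟩ := hi1
  have hsq : (∑ k, A i k) * (∑ k, A i k) = (A * Aᵀ) i i := by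
    rw [Finset.sum_mul_sum_self_of_pairwise_mul_eq_zero fun j _ k _ => hrow i j k, mul_apply]
    rfl
  refine ⟨B i i * ∑ k, A i k, ?_⟩
  calc (∑ k, A i k) * (B i i * ∑ k, A i k)
      = (A * Aᵀ) i i * B i i := by rw [← hsq]; ring
    _ = 1 := hd1.mul_apply_diag_eq_one hB i

/-- If `A * Aᵀ` and `Aᵀ * A` are invertible diagonal matrices over a commutative antiring,
then entries in the same row (resp. column) are pairwise orthogonal, and every row sum is
an invertible element of `S`. -/
theorem stmt_7 {S : Type*} [CommSemiring S]
    (hzs : ∀ a b : S, a + b = 0 → a = 0 ∧ b = 0)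
    (n : ℕ) (A : Matrix (Fin n) (Fin n) S)
    (hd1 : (A * Aᵀ).IsDiag) (hd2 : (Aᵀ * A).IsDiag)
    (hi1 : ∃ B, A * Aᵀ * B = 1 ∧ B * (A * Aᵀ) = 1)
    (hi2 : ∃ B, Aᵀ * A * B = 1 ∧ B * (Aᵀ * A) = 1) :
    (∀ i j k, j ≠ k → A i j * A i k = 0 ∧ A j i * A k i = 0) ∧
    (∀ i, ∃ u : S, (∑ k, A i k) * u = 1) :=
  stmt_7_general hzs n A hd1 hd2 hi1
end

section
/- Let S be a commutative antiring. An n×n matrix A over S is invertible if and only if A = D·Σ_{σ∈Sₙ} a_σ P_σ, where D is an invertible diagonal matrix, the P_σ are permutation matrices, and the a_σ are pairwise orthogonal elements of S summing to 1. -/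
set_option maxHeartbeats 1000000

open Finset

private lemma idem_aux {S : Type*} [CommSemiring S] {ι : Type*} [Fintype ι] (c : ι → S)
    (hsum : ∑ p, c p = 1) (horth : ∀ p q, p ≠ q → c p * c q = 0) (p : ι) :
    c p * c p = c p := by
  have h := Finset.sum_eq_single (s := Finset.univ) (f := fun q => c p * c q) p
    (fun q _ hq => horth p q (Ne.symm hq)) (by simp)
  calc c p * c p = ∑ q, c p * c q := h.symm
    _ = c p * ∑ q, c q := by rw [Finset.mul_sum]
    _ = c p := by rw [hsum, mul_one]

private lemma perm_mul_inv {S : Type*} [CommSemiring S] {n : ℕ} (σ : Equiv.Perm (Fin n)) :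
    Equiv.Perm.permMatrix S σ * Equiv.Perm.permMatrix S σ⁻¹ = 1 := by
  rw [Equiv.Perm.permMatrix, Equiv.Perm.permMatrix, ← PEquiv.toMatrix_trans,
    ← Equiv.toPEquiv_trans]
  rw [← Equiv.Perm.mul_def, inv_mul_cancel]
  rw [show (1 : Equiv.Perm (Fin n)).toPEquiv = PEquiv.refl (Fin n) from Equiv.toPEquiv_refl,
    PEquiv.toMatrix_refl]

private lemma perm_inv_mul {S : Type*} [CommSemiring S] {n : ℕ} (σ : Equiv.Perm (Fin n)) :
    Equiv.Perm.permMatrix S σ⁻¹ * Equiv.Perm.permMatrix S σ = 1 := by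
  rw [Equiv.Perm.permMatrix, Equiv.Perm.permMatrix, ← PEquiv.toMatrix_trans,
    ← Equiv.toPEquiv_trans]
  rw [← Equiv.Perm.mul_def, mul_inv_cancel]
  rw [show (1 : Equiv.Perm (Fin n)).toPEquiv = PEquiv.refl (Fin n) from Equiv.toPEquiv_refl,
    PEquiv.toMatrix_refl]


/-- A matrix over a commutative antiring is invertible iff it equals `D * Σ_σ a_σ P_σ` for an
invertible diagonal matrix `D`, permutation matrices `P_σ`, and a pairwise orthogonal family
`(a_σ)` summing to 1. -/
theorem stmt_8 {S : Type*} [CommSemiring S]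
    (hzs : ∀ a b : S, a + b = 0 → a = 0 ∧ b = 0)
    (n : ℕ) (A : Matrix (Fin n) (Fin n) S) :
    (∃ B, A * B = 1 ∧ B * A = 1) ↔
      ∃ (d : Fin n → S) (a : Equiv.Perm (Fin n) → S),
        (∀ i, ∃ u : S, d i * u = 1) ∧
        (∑ σ, a σ = 1) ∧ (∀ σ τ, σ ≠ τ → a σ * a τ = 0) ∧
        A = Matrix.diagonal d * ∑ σ, a σ • Equiv.Perm.permMatrix S σ := by
  constructor
  · rintro ⟨B, hAB, hBA⟩
    classical
    have hzsum : ∀ (f : Fin n → S), ∑ k, f k = 0 → ∀ k, f k = 0 := by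
      intro f hf k
      have h := Finset.add_sum_erase Finset.univ f (Finset.mem_univ k)
      exact (hzs _ _ (h.trans hf)).1
    have h1 : ∀ i j, i ≠ j → ∀ k, A i k * B k j = 0 := by
      intro i j hij k
      have h := congrFun (congrFun hAB i) j
      rw [Matrix.mul_apply, Matrix.one_apply_ne hij] at h
      exact hzsum _ h k
    have h2 : ∀ k l, k ≠ l → ∀ i, B k i * A i l = 0 := by
      intro k l hkl i
      have h := congrFun (congrFun hBA k) l
      rw [Matrix.mul_apply, Matrix.one_apply_ne hkl] at h
      exact hzsum _ h i
    have hdAB : ∀ i, ∑ k, A i k * B k i = 1 := by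
      intro i
      have h := congrFun (congrFun hAB i) i
      rwa [Matrix.mul_apply, Matrix.one_apply_eq] at h
    have hx0 : ∀ i k l, k ≠ l → (A i k * B k i) * (A i l * B l i) = 0 := by
      intro i k l hkl
      calc (A i k * B k i) * (A i l * B l i)
          = (B k i * A i l) * (A i k * B l i) := by ring
        _ = 0 := by rw [h2 k l hkl i, zero_mul]
    have hxidem : ∀ i k, (A i k * B k i) * (A i k * B k i) = A i k * B k i := fun i k =>
      idem_aux (fun k => A i k * B k i) (hdAB i) (fun p q hpq => hx0 i p q hpq) k
    -- the orthogonal family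
    have horth : ∀ σ τ : Equiv.Perm (Fin n), σ ≠ τ →
        (∏ k, A k (σ k) * B (σ k) k) * (∏ k, A k (τ k) * B (τ k) k) = 0 := by
      intro σ τ hστ
      obtain ⟨i, hi⟩ : ∃ i, σ i ≠ τ i := by
        by_contra h
        push_neg at h
        exact hστ (Equiv.ext h)
      rw [← Finset.prod_mul_distrib]
      exact Finset.prod_eq_zero (Finset.mem_univ i) (hx0 i (σ i) (τ i) hi)
    have hsum : ∑ σ : Equiv.Perm (Fin n), (∏ k, A k (σ k) * B (σ k) k) = 1 := by
      have hstart : ∑ g : Fin n → Fin n, ∏ i, A i (g i) * B (g i) i = 1 := by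
        rw [← Fintype.prod_sum (fun i k => A i k * B k i)]
        calc ∏ i, ∑ k, A i k * B k i = ∏ _i : Fin n, (1 : S) :=
              Finset.prod_congr rfl fun i _ => hdAB i
          _ = 1 := Finset.prod_const_one
      have hfilter := Finset.sum_filter_add_sum_filter_not (Finset.univ : Finset (Fin n → Fin n))
        (fun g => Function.Injective g) (fun g => ∏ i, A i (g i) * B (g i) i)
      have hnon : ∑ g ∈ Finset.univ.filter (fun g : Fin n → Fin n => ¬ Function.Injective g),
          ∏ i, A i (g i) * B (g i) i = 0 := by
        apply Finset.sum_eq_zero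
        intro g hg
        rw [Finset.mem_filter] at hg
        obtain ⟨i, j, hgij, hij⟩ := Function.not_injective_iff.mp hg.2
        have hji : j ∈ Finset.univ.erase i := Finset.mem_erase.mpr ⟨Ne.symm hij, Finset.mem_univ j⟩
        rw [← Finset.mul_prod_erase Finset.univ _ (Finset.mem_univ i),
          ← Finset.mul_prod_erase _ _ hji, ← mul_assoc]
        have hzero : (A i (g i) * B (g i) i) * (A j (g j) * B (g j) j) = 0 := by
          rw [hgij]
          calc (A i (g j) * B (g j) i) * (A j (g j) * B (g j) j)
              = (A i (g j) * B (g j) j) * (A j (g j) * B (g j) i) := by ring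
            _ = 0 := by rw [h1 i j hij (g j), zero_mul]
        rw [hzero, zero_mul]
      have hbij : ∑ g ∈ Finset.univ.filter (fun g : Fin n → Fin n => Function.Injective g),
          ∏ i, A i (g i) * B (g i) i = ∑ σ : Equiv.Perm (Fin n), ∏ k, A k (σ k) * B (σ k) k := by
        refine (Finset.sum_bij
          (fun (σ : Equiv.Perm (Fin n)) (_ : σ ∈ Finset.univ) => (⇑σ : Fin n → Fin n))
          ?_ ?_ ?_ ?_).symm
        · intro σ _
          exact Finset.mem_filter.mpr ⟨Finset.mem_univ _, σ.injective⟩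
        · intro σ₁ _ σ₂ _ h
          exact Equiv.coe_fn_injective h
        · intro g hg
          rw [Finset.mem_filter] at hg
          exact ⟨Equiv.ofBijective g (Finite.injective_iff_bijective.mp hg.2), Finset.mem_univ _, rfl⟩
        · intro σ _
          rfl
      rw [← hbij, ← hstart, ← hfilter, hnon, add_zero]
    have hidem : ∀ σ : Equiv.Perm (Fin n),
        (∏ k, A k (σ k) * B (σ k) k) * (∏ k, A k (σ k) * B (σ k) k)
          = ∏ k, A k (σ k) * B (σ k) k :=
      idem_aux (fun σ : Equiv.Perm (Fin n) => ∏ k, A k (σ k) * B (σ k) k) hsum horth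
    have ha_x : ∀ (σ : Equiv.Perm (Fin n)) i,
        (∏ k, A k (σ k) * B (σ k) k) * (A i (σ i) * B (σ i) i) = ∏ k, A k (σ k) * B (σ k) k := by
      intro σ i
      have hsplit := Finset.mul_prod_erase Finset.univ
        (fun k => A k (σ k) * B (σ k) k) (Finset.mem_univ i)
      calc (∏ k, A k (σ k) * B (σ k) k) * (A i (σ i) * B (σ i) i)
          = ((A i (σ i) * B (σ i) i) * (A i (σ i) * B (σ i) i)) *
              ∏ k ∈ Finset.univ.erase i, (A k (σ k) * B (σ k) k) := by rw [← hsplit]; ring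
        _ = (A i (σ i) * B (σ i) i) * ∏ k ∈ Finset.univ.erase i, (A k (σ k) * B (σ k) k) := by
            rw [hxidem i (σ i)]
        _ = ∏ k, A k (σ k) * B (σ k) k := hsplit
    have ha_kill : ∀ (σ : Equiv.Perm (Fin n)) i j, σ i ≠ j →
        (∏ k, A k (σ k) * B (σ k) k) * A i j = 0 := by
      intro σ i j hne
      have hsplit := Finset.mul_prod_erase Finset.univ
        (fun k => A k (σ k) * B (σ k) k) (Finset.mem_univ i)
      calc (∏ k, A k (σ k) * B (σ k) k) * A i j
          = (A i (σ i) * (B (σ i) i * A i j)) *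
              ∏ k ∈ Finset.univ.erase i, (A k (σ k) * B (σ k) k) := by rw [← hsplit]; ring
        _ = 0 := by rw [h2 (σ i) j hne i, mul_zero, zero_mul]
    refine ⟨fun i => ∑ σ : Equiv.Perm (Fin n), (∏ k, A k (σ k) * B (σ k) k) * A i (σ i),
      fun σ => ∏ k, A k (σ k) * B (σ k) k, ?_, hsum, horth, ?_⟩
    · -- invertibility of d
      intro i
      refine ⟨∑ σ : Equiv.Perm (Fin n), (∏ k, A k (σ k) * B (σ k) k) * B (σ i) i, ?_⟩
      rw [Finset.sum_mul_sum]
      calc ∑ σ : Equiv.Perm (Fin n), ∑ τ : Equiv.Perm (Fin n),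
            ((∏ k, A k (σ k) * B (σ k) k) * A i (σ i)) *
              ((∏ k, A k (τ k) * B (τ k) k) * B (τ i) i)
          = ∑ σ : Equiv.Perm (Fin n),
              ((∏ k, A k (σ k) * B (σ k) k) * A i (σ i)) *
              ((∏ k, A k (σ k) * B (σ k) k) * B (σ i) i) := by
            refine Finset.sum_congr rfl fun σ _ => Finset.sum_eq_single σ
              (fun τ _ hτ => ?_) (by simp)
            calc ((∏ k, A k (σ k) * B (σ k) k) * A i (σ i)) *
                  ((∏ k, A k (τ k) * B (τ k) k) * B (τ i) i)
                = ((∏ k, A k (σ k) * B (σ k) k) * (∏ k, A k (τ k) * B (τ k) k)) *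
                    (A i (σ i) * B (τ i) i) := by ring
              _ = 0 := by rw [horth σ τ (Ne.symm hτ), zero_mul]
        _ = ∑ σ : Equiv.Perm (Fin n), ∏ k, A k (σ k) * B (σ k) k := by
            refine Finset.sum_congr rfl fun σ _ => ?_
            calc ((∏ k, A k (σ k) * B (σ k) k) * A i (σ i)) *
                  ((∏ k, A k (σ k) * B (σ k) k) * B (σ i) i)
                = ((∏ k, A k (σ k) * B (σ k) k) * (∏ k, A k (σ k) * B (σ k) k)) *
                    (A i (σ i) * B (σ i) i) := by ring
              _ = (∏ k, A k (σ k) * B (σ k) k) * (A i (σ i) * B (σ i) i) := by rw [hidem σ]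
              _ = ∏ k, A k (σ k) * B (σ k) k := ha_x σ i
        _ = 1 := hsum
    · -- A = D * M
      ext i j
      rw [Matrix.diagonal_mul]
      simp only [Matrix.sum_apply, Matrix.smul_apply, smul_eq_mul]
      have hperm : ∀ σ : Equiv.Perm (Fin n),
          (Equiv.Perm.permMatrix S σ) i j = if σ i = j then 1 else 0 := by
        intro σ
        simp [Equiv.Perm.permMatrix, PEquiv.toMatrix_apply, Equiv.toPEquiv_apply]
      simp only [hperm]
      rw [Finset.sum_mul_sum]
      refine Eq.symm ?_
      calc ∑ σ : Equiv.Perm (Fin n), ∑ τ : Equiv.Perm (Fin n),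
            ((∏ k, A k (σ k) * B (σ k) k) * A i (σ i)) *
              ((∏ k, A k (τ k) * B (τ k) k) * (if τ i = j then 1 else 0))
          = ∑ σ : Equiv.Perm (Fin n),
              ((∏ k, A k (σ k) * B (σ k) k) * A i (σ i)) *
              ((∏ k, A k (σ k) * B (σ k) k) * (if σ i = j then 1 else 0)) := by
            refine Finset.sum_congr rfl fun σ _ => Finset.sum_eq_single σ
              (fun τ _ hτ => ?_) (by simp)
            calc ((∏ k, A k (σ k) * B (σ k) k) * A i (σ i)) *
                  ((∏ k, A k (τ k) * B (τ k) k) * (if τ i = j then 1 else 0))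
                = ((∏ k, A k (σ k) * B (σ k) k) * (∏ k, A k (τ k) * B (τ k) k)) *
                    (A i (σ i) * (if τ i = j then 1 else 0)) := by ring
              _ = 0 := by rw [horth σ τ (Ne.symm hτ), zero_mul]
        _ = ∑ σ : Equiv.Perm (Fin n), (∏ k, A k (σ k) * B (σ k) k) * A i j := by
            refine Finset.sum_congr rfl fun σ _ => ?_
            by_cases h : σ i = j
            · rw [if_pos h, mul_one, ← h]
              calc ((∏ k, A k (σ k) * B (σ k) k) * A i (σ i)) *
                    (∏ k, A k (σ k) * B (σ k) k)
                  = ((∏ k, A k (σ k) * B (σ k) k) * (∏ k, A k (σ k) * B (σ k) k)) *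
                      A i (σ i) := by ring
                _ = (∏ k, A k (σ k) * B (σ k) k) * A i (σ i) := by rw [hidem σ]
            · rw [if_neg h, mul_zero, mul_zero, ha_kill σ i j h]
        _ = A i j := by rw [← Finset.sum_mul, hsum, one_mul]
  · rintro ⟨d, a, hd, hsum, horth, hA⟩
    classical
    choose u hu using hd
    have hidem := idem_aux a hsum horth
    set M : Matrix (Fin n) (Fin n) S := ∑ σ, a σ • Equiv.Perm.permMatrix S σ with hM
    set N : Matrix (Fin n) (Fin n) S := ∑ σ, a σ • Equiv.Perm.permMatrix S σ⁻¹ with hN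
    have key : ∀ (P Q : Equiv.Perm (Fin n) → Matrix (Fin n) (Fin n) S),
        (∀ σ, P σ * Q σ = 1) →
        (∑ σ, a σ • P σ) * (∑ σ, a σ • Q σ) = 1 := by
      intro P Q hPQ
      rw [Finset.sum_mul]
      have h1 : ∀ σ : Equiv.Perm (Fin n),
          (a σ • P σ) * (∑ τ, a τ • Q τ) = a σ • (1 : Matrix (Fin n) (Fin n) S) := by
        intro σ
        rw [Finset.mul_sum]
        have h2 : ∀ τ : Equiv.Perm (Fin n),
            (a σ • P σ) * (a τ • Q τ) = (a σ * a τ) • (P σ * Q τ) := by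
          intro τ
          rw [smul_mul_assoc, mul_smul_comm, smul_smul]
        calc ∑ τ, (a σ • P σ) * (a τ • Q τ) = ∑ τ, (a σ * a τ) • (P σ * Q τ) := by
              exact Finset.sum_congr rfl fun τ _ => h2 τ
          _ = (a σ * a σ) • (P σ * Q σ) := Finset.sum_eq_single σ
              (fun τ _ hτ => by rw [horth σ τ (Ne.symm hτ), zero_smul]) (by simp)
          _ = a σ • (1 : Matrix (Fin n) (Fin n) S) := by rw [hidem σ, hPQ σ]
      calc ∑ σ, (a σ • P σ) * (∑ τ, a τ • Q τ)
          = ∑ σ, a σ • (1 : Matrix (Fin n) (Fin n) S) :=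
            Finset.sum_congr rfl fun σ _ => h1 σ
        _ = (∑ σ, a σ) • (1 : Matrix (Fin n) (Fin n) S) := by rw [Finset.sum_smul]
        _ = 1 := by rw [hsum, one_smul]
    have hMN : M * N = 1 := key _ _ perm_mul_inv
    have hNM : N * M = 1 := key _ _ perm_inv_mul
    have hDU : Matrix.diagonal d * Matrix.diagonal u = 1 := by
      rw [Matrix.diagonal_mul_diagonal]
      rw [show (fun i => d i * u i) = fun _ => (1:S) from funext fun i => hu i, Matrix.diagonal_one]
    have hUD : Matrix.diagonal u * Matrix.diagonal d = 1 := by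
      rw [Matrix.diagonal_mul_diagonal]
      rw [show (fun i => u i * d i) = fun _ => (1:S) from funext fun i => (mul_comm (u i) (d i)).trans (hu i),
        Matrix.diagonal_one]
    refine ⟨N * Matrix.diagonal u, ?_, ?_⟩
    · rw [hA]
      calc Matrix.diagonal d * M * (N * Matrix.diagonal u)
          = Matrix.diagonal d * (M * N) * Matrix.diagonal u := by
            rw [mul_assoc, mul_assoc, mul_assoc]
        _ = 1 := by rw [hMN, mul_one, hDU]
    · rw [hA]
      calc N * Matrix.diagonal u * (Matrix.diagonal d * M)
          = N * (Matrix.diagonal u * Matrix.diagonal d) * M := by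
            rw [mul_assoc, mul_assoc, mul_assoc]
        _ = 1 := by rw [hUD, mul_one, hNM]
end

section
/- Let S be a commutative antiring, D = Diag(d₁,...,dₙ) an invertible diagonal matrix over S, and {a_σ}_{σ∈Sₙ} pairwise orthogonal idempotents summing to 1. Then the matrix A = D·Σ_σ a_σ P_σ is invertible, with inverse B = Σ_σ a_σ·Diag(d_{σ⁻¹(1)}⁻¹,...,d_{σ⁻¹(n)}⁻¹)·P_σᵀ. -/
/-!
Because the `a σ` are complete orthogonal idempotents, a product `(∑ a σ • M σ) * (∑ a σ • N σ)`
collapses to `∑ a σ • (M σ * N σ)`, so it suffices that each `D * P_σ` is inverted by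
`Diag(d_{σ⁻¹ i}⁻¹) * P_σᵀ`; this holds since conjugating a diagonal matrix by `P_σ` permutes
its diagonal entries by `σ`.
-/

open Matrix

theorem OrthogonalIdempotents.sum_smul_mul_sum_smul {ι S A : Type*} [Fintype ι] [CommSemiring S]
    [Semiring A] [Module S A] [IsScalarTower S A A] [SMulCommClass S A A]
    {a : ι → S} (ha : OrthogonalIdempotents a) (M N : ι → A) :
    (∑ i, a i • M i) * (∑ i, a i • N i) = ∑ i, a i • (M i * N i) := by
  rw [Finset.sum_mul_sum]
  refine Finset.sum_congr rfl fun i _ => ?_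
  rw [Finset.sum_eq_single i]
  · rw [smul_mul_smul_comm, (ha.idem i).eq]
  · intro j _ hji
    rw [smul_mul_smul_comm, ha.ortho hji.symm, zero_smul]
  · simp

theorem CompleteOrthogonalIdempotents.sum_smul_mul_sum_smul_eq_one {ι S A : Type*} [Fintype ι]
    [CommSemiring S] [Semiring A] [Module S A] [IsScalarTower S A A] [SMulCommClass S A A]
    {a : ι → S} (ha : CompleteOrthogonalIdempotents a) {M N : ι → A}
    (hMN : ∀ i, M i * N i = 1) :
    (∑ i, a i • M i) * (∑ i, a i • N i) = 1 := by
  simp only [ha.toOrthogonalIdempotents.sum_smul_mul_sum_smul, hMN, ← Finset.sum_smul,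
    ha.complete, one_smul]

namespace Matrix

variable {n R : Type*} [Fintype n] [DecidableEq n] [CommSemiring R]

theorem permMatrix_mul_diagonal_mul_transpose (σ : Equiv.Perm n) (v : n → R) :
    σ.permMatrix R * diagonal v * (σ.permMatrix R)ᵀ = diagonal (v ∘ σ) := by
  rw [transpose_permMatrix, PEquiv.toMatrix_toPEquiv_mul, PEquiv.mul_toMatrix_toPEquiv,
    submatrix_submatrix]
  exact submatrix_diagonal_equiv v σ

theorem transpose_permMatrix_mul_diagonal_mul (σ : Equiv.Perm n) (v : n → R) :
    (σ.permMatrix R)ᵀ * diagonal v * σ.permMatrix R = diagonal (v ∘ ⇑σ⁻¹) := by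
  simpa [transpose_permMatrix] using permMatrix_mul_diagonal_mul_transpose σ⁻¹ v

variable {d dinv : n → R}

theorem diagonal_mul_permMatrix_mul_inverse (hd : ∀ i, d i * dinv i = 1) (σ : Equiv.Perm n) :
    diagonal d * σ.permMatrix R * (diagonal (fun i => dinv (σ⁻¹ i)) * (σ.permMatrix R)ᵀ) = 1 := by
  rw [Matrix.mul_assoc, ← Matrix.mul_assoc (σ.permMatrix R),
    permMatrix_mul_diagonal_mul_transpose, diagonal_mul_diagonal, ← diagonal_one]
  congr 1
  ext i
  simp [hd]

theorem inverse_mul_diagonal_mul_permMatrix (hd : ∀ i, d i * dinv i = 1) (σ : Equiv.Perm n) :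
    diagonal (fun i => dinv (σ⁻¹ i)) * (σ.permMatrix R)ᵀ * (diagonal d * σ.permMatrix R) = 1 := by
  rw [Matrix.mul_assoc, ← Matrix.mul_assoc _ (diagonal d),
    transpose_permMatrix_mul_diagonal_mul, diagonal_mul_diagonal, ← diagonal_one]
  congr 1
  ext i
  simp [mul_comm, hd]

end Matrix

theorem stmt_9_general {S : Type*} [CommSemiring S]
    (n : ℕ) (d dinv : Fin n → S) (hd : ∀ i, d i * dinv i = 1)
    (a : Equiv.Perm (Fin n) → S)
    (horth : ∀ σ τ, σ ≠ τ → a σ * a τ = 0)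
    (hidem : ∀ σ, a σ * a σ = a σ)
    (hsum : ∑ σ, a σ = 1) :
    (Matrix.diagonal d * ∑ σ, a σ • Equiv.Perm.permMatrix S σ) *
      (∑ σ, a σ • (Matrix.diagonal (fun i => dinv (σ⁻¹ i)) * (Equiv.Perm.permMatrix S σ)ᵀ)) = 1 ∧
    (∑ σ, a σ • (Matrix.diagonal (fun i => dinv (σ⁻¹ i)) * (Equiv.Perm.permMatrix S σ)ᵀ)) *
      (Matrix.diagonal d * ∑ σ, a σ • Equiv.Perm.permMatrix S σ) = 1 := by
  have ha : CompleteOrthogonalIdempotents a := ⟨⟨hidem, fun σ τ h => horth σ τ h⟩, hsum⟩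
  have hA : Matrix.diagonal d * ∑ σ, a σ • Equiv.Perm.permMatrix S σ
      = ∑ σ, a σ • (Matrix.diagonal d * Equiv.Perm.permMatrix S σ) := by
    simp only [Finset.mul_sum, Matrix.mul_smul]
  rw [hA]
  exact ⟨ha.sum_smul_mul_sum_smul_eq_one (diagonal_mul_permMatrix_mul_inverse hd),
    ha.sum_smul_mul_sum_smul_eq_one (inverse_mul_diagonal_mul_permMatrix hd)⟩

/-- If `D = diagonal d` is invertible and `(a_σ)` are pairwise orthogonal idempotents summing
to 1, then `A = D * Σ_σ a_σ P_σ` is invertible with explicit inverse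
`B = Σ_σ a_σ • (Diag(d_{σ⁻¹(i)}⁻¹) * P_σᵀ)`. -/
theorem stmt_9 {S : Type*} [CommSemiring S]
    (hzs : ∀ a b : S, a + b = 0 → a = 0 ∧ b = 0)
    (n : ℕ) (d dinv : Fin n → S) (hd : ∀ i, d i * dinv i = 1)
    (a : Equiv.Perm (Fin n) → S)
    (horth : ∀ σ τ, σ ≠ τ → a σ * a τ = 0)
    (hidem : ∀ σ, a σ * a σ = a σ)
    (hsum : ∑ σ, a σ = 1) :
    (Matrix.diagonal d * ∑ σ, a σ • Equiv.Perm.permMatrix S σ) *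
      (∑ σ, a σ • (Matrix.diagonal (fun i => dinv (σ⁻¹ i)) * (Equiv.Perm.permMatrix S σ)ᵀ)) = 1 ∧
    (∑ σ, a σ • (Matrix.diagonal (fun i => dinv (σ⁻¹ i)) * (Equiv.Perm.permMatrix S σ)ᵀ)) *
      (Matrix.diagonal d * ∑ σ, a σ • Equiv.Perm.permMatrix S σ) = 1 :=
  stmt_9_general n d dinv hd a horth hidem hsum
end

section
/- Over a commutative antiring S, if A and B are n×n matrices with AB = I, then BA = I. -/
/-- Over a commutative antiring, `A * B = 1` implies `B * A = 1` for square matrices. -/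
theorem stmt_10 {S : Type*} [CommSemiring S]
    (hzs : ∀ a b : S, a + b = 0 → a = 0 ∧ b = 0)
    (n : ℕ) (A B : Matrix (Fin n) (Fin n) S) (h : A * B = 1) : B * A = 1 := by
  classical
  -- summands of a zero sum are zero
  have hsum0 : ∀ (s : Finset (Fin n)) (f : Fin n → S), (∑ i ∈ s, f i) = 0 → ∀ i ∈ s, f i = 0 := by
    intro s f
    induction s using Finset.cons_induction with
    | empty => intro _ i hi; exact absurd hi (Finset.notMem_empty i)
    | cons a s ha ih =>
      intro hsum i hi
      rw [Finset.sum_cons] at hsum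
      obtain ⟨h1, h2⟩ := hzs _ _ hsum
      rcases Finset.mem_cons.1 hi with rfl | hi
      · exact h1
      · exact ih h2 i hi
  have hAB : ∀ i j, (∑ k, A i k * B k j) = if i = j then (1 : S) else 0 := by
    intro i j
    have := congrFun (congrFun h i) j
    rwa [Matrix.mul_apply, Matrix.one_apply] at this
  have hzero : ∀ i j k : Fin n, i ≠ j → A i k * B k j = 0 := by
    intro i j k hij
    have := hAB i j
    rw [if_neg hij] at this
    exact hsum0 Finset.univ _ this k (Finset.mem_univ k)
  have hone : ∀ i, (∑ k, A i k * B k i) = 1 := by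
    intro i; have := hAB i i; rwa [if_pos rfl] at this
  set g : (Fin n → Fin n) → S := fun f => ∏ i, A i (f i) * B (f i) i with hg
  -- if `c` kills the B-factor at position `i`, it kills the whole product
  have hkillB : ∀ (f : Fin n → Fin n) (i : Fin n) (c : S), c * B (f i) i = 0 → c * g f = 0 := by
    intro f i c hc
    rw [hg]
    simp only []
    rw [← Finset.mul_prod_erase Finset.univ _ (Finset.mem_univ i)]
    set R := ∏ x ∈ Finset.univ.erase i, A x (f x) * B (f x) x with hR
    calc c * (A i (f i) * B (f i) i * R)
        = (c * B (f i) i) * (A i (f i) * R) := by ring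
      _ = 0 := by rw [hc, zero_mul]
  have hkillA : ∀ (f : Fin n → Fin n) (i : Fin n) (c : S), c * A i (f i) = 0 → c * g f = 0 := by
    intro f i c hc
    rw [hg]
    simp only []
    rw [← Finset.mul_prod_erase Finset.univ _ (Finset.mem_univ i)]
    set R := ∏ x ∈ Finset.univ.erase i, A x (f x) * B (f x) x with hR
    calc c * (A i (f i) * B (f i) i * R)
        = (c * A i (f i)) * (B (f i) i * R) := by ring
      _ = 0 := by rw [hc, zero_mul]
  -- each permutation term absorbs any of its own factors
  have habs : ∀ (σ : Equiv.Perm (Fin n)) (m : Fin n),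
      (A m (σ m) * B (σ m) m) * g ⇑σ = g ⇑σ := by
    intro σ m
    conv_rhs => rw [← one_mul (g ⇑σ), ← hone m, Finset.sum_mul]
    rw [Finset.sum_eq_single (σ m)]
    · intro k _ hk
      apply hkillA ⇑σ (σ.symm k)
      have hne : σ.symm k ≠ m := by
        intro hcontra; apply hk; rw [← hcontra]; simp
      calc A m k * B k m * A (σ.symm k) (σ (σ.symm k))
          = A m k * B k m * A (σ.symm k) k := by rw [Equiv.apply_symm_apply]
        _ = (A (σ.symm k) k * B k m) * A m k := by ring
        _ = 0 := by rw [hzero _ _ _ hne, zero_mul]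
    · intro hm; exact absurd (Finset.mem_univ (σ m)) hm
  -- key pointwise computation
  have hkey : ∀ (σ : Equiv.Perm (Fin n)) (p q : Fin n),
      (∑ k, B p k * A k q) * g ⇑σ = if p = q then g ⇑σ else 0 := by
    intro σ p q
    rw [Finset.sum_mul]
    by_cases hpq : p = q
    · subst hpq
      rw [if_pos rfl, Finset.sum_eq_single (σ.symm p)]
      · calc B p (σ.symm p) * A (σ.symm p) p * g ⇑σ
            = (A (σ.symm p) (σ (σ.symm p)) * B (σ (σ.symm p)) (σ.symm p)) * g ⇑σ := by
              rw [Equiv.apply_symm_apply]; ring_nf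
          _ = g ⇑σ := habs σ (σ.symm p)
      · intro k _ hk
        apply hkillB ⇑σ (σ.symm p)
        calc B p k * A k p * B (σ (σ.symm p)) (σ.symm p)
            = B p k * (A k p * B p (σ.symm p)) := by rw [Equiv.apply_symm_apply]; ring
          _ = 0 := by
              rw [hzero k (σ.symm p) p (fun hc => hk (by rw [hc])), mul_zero]
      · intro hm; exact absurd (Finset.mem_univ _) hm
    · rw [if_neg hpq]
      apply Finset.sum_eq_zero
      intro k _
      by_cases hk : k = σ.symm q
      · subst hk
        apply hkillA ⇑σ (σ.symm p)
        have hne : σ.symm p ≠ σ.symm q := fun hc => hpq (by simpa using congrArg σ hc)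
        calc B p (σ.symm q) * A (σ.symm q) q * A (σ.symm p) (σ (σ.symm p))
            = (A (σ.symm p) p * B p (σ.symm q)) * A (σ.symm q) q := by
              rw [Equiv.apply_symm_apply]; ring
          _ = 0 := by rw [hzero _ _ _ hne, zero_mul]
      · apply hkillB ⇑σ (σ.symm q)
        calc B p k * A k q * B (σ (σ.symm q)) (σ.symm q)
            = B p k * (A k q * B q (σ.symm q)) := by rw [Equiv.apply_symm_apply]; ring
          _ = 0 := by rw [hzero k (σ.symm q) q hk, mul_zero]
  -- a non-injective function contributes zero
  have gzero : ∀ f : Fin n → Fin n, ¬ Function.Injective f → g f = 0 := by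
    intro f hnf
    rw [Function.not_injective_iff] at hnf
    obtain ⟨i, j, hfij, hij⟩ := hnf
    rw [hg]
    simp only []
    rw [← Finset.mul_prod_erase Finset.univ _ (Finset.mem_univ i),
        ← Finset.mul_prod_erase _ _ (Finset.mem_erase.mpr ⟨Ne.symm hij, Finset.mem_univ j⟩)]
    set R := ∏ x ∈ (Finset.univ.erase i).erase j, A x (f x) * B (f x) x with hR
    rw [← hfij]
    calc A i (f i) * B (f i) i * (A j (f i) * B (f i) j * R)
        = (A i (f i) * B (f i) j) * (B (f i) i * A j (f i) * R) := by ring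
      _ = 0 := by rw [hzero i j (f i) hij, zero_mul]
  -- expansion of 1 as a sum over permutations
  have hexp : (1 : S) = ∑ σ : Equiv.Perm (Fin n), g ⇑σ := by
    have h1 : (1 : S) = ∏ i : Fin n, ∑ k, A i k * B k i := by
      rw [Finset.prod_congr rfl (fun i _ => hone i), Finset.prod_const_one]
    have h2 : (∏ i : Fin n, ∑ k, A i k * B k i) = ∑ f : Fin n → Fin n, g f := by
      rw [Finset.prod_univ_sum]
      rw [Fintype.piFinset_univ]
    have himg : ∑ f ∈ Finset.univ.image (fun σ : Equiv.Perm (Fin n) => ⇑σ), g f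
        = ∑ σ : Equiv.Perm (Fin n), g ⇑σ := by
      apply Finset.sum_image
      intro x _ y _ hxy
      exact Equiv.coe_fn_injective hxy
    have hsub : (∑ f : Fin n → Fin n, g f)
        = ∑ f ∈ Finset.univ.image (fun σ : Equiv.Perm (Fin n) => ⇑σ), g f := by
      apply (Finset.sum_subset (Finset.subset_univ _) ?_).symm
      intro f _ hf
      apply gzero
      intro hinj
      have hbij : Function.Bijective f := Finite.injective_iff_bijective.mp hinj
      exact hf (Finset.mem_image.mpr ⟨Equiv.ofBijective f hbij, Finset.mem_univ _, rfl⟩)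
    rw [h1, h2, hsub, himg]
  -- final assembly
  ext p q
  rw [Matrix.mul_apply, Matrix.one_apply]
  calc (∑ k, B p k * A k q)
      = (∑ k, B p k * A k q) * 1 := (mul_one _).symm
    _ = (∑ k, B p k * A k q) * ∑ σ : Equiv.Perm (Fin n), g ⇑σ := by rw [← hexp]
    _ = ∑ σ : Equiv.Perm (Fin n), (∑ k, B p k * A k q) * g ⇑σ := Finset.mul_sum _ _ _
    _ = ∑ σ : Equiv.Perm (Fin n), (if p = q then g ⇑σ else 0) :=
        Finset.sum_congr rfl (fun σ _ => hkey σ p q)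
    _ = if p = q then (1 : S) else 0 := by
        by_cases hpq : p = q
        · simp only [hpq, if_pos rfl]
          exact hexp.symm
        · simp [hpq]
end

section
/- Over a commutative antiring S, the invertible diagonal n×n matrices form a normal subgroup of GLₙ(S); in particular, conjugation of a diagonal matrix by any permutation matrix yields a diagonal matrix. -/
/-!
An off-diagonal entry of `A * B = 1` is a sum `∑ₖ A i k * B k j` equal to zero, so in a
zerosumfree semiring every term vanishes. Hence `(A * D * B) i j = ∑ₖ A i k * D k k * B k j`
vanishes too when `D` is diagonal: diagonal matrices are stable under conjugation by any
invertible matrix, and in particular by permutation matrices, whose inverse is the transpose.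
-/

open Matrix

theorem subsingleton_addUnits_of_add_eq_zero {M : Type*} [AddMonoid M]
    (h : ∀ a b : M, a + b = 0 → a = 0 ∧ b = 0) : Subsingleton (AddUnits M) :=
  ⟨fun u v => AddUnits.ext <| (h _ _ u.add_neg).1.trans (h _ _ v.add_neg).1.symm⟩

namespace Matrix

variable {n R : Type*} [Fintype n]

theorem IsDiag.mul [NonUnitalNonAssocSemiring R] {A B : Matrix n n R} (hA : A.IsDiag)
    (hB : B.IsDiag) : (A * B).IsDiag := by
  classical
  rw [← hA.diagonal_diag, ← hB.diagonal_diag, diagonal_mul_diagonal]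
  exact isDiag_diagonal _

theorem IsDiag.of_mul_eq_one [DecidableEq n] [Semiring R] {A B : Matrix n n R}
    (hA : A.IsDiag) (hAB : A * B = 1) (hBA : B * A = 1) : B.IsDiag := by
  intro i j hij
  obtain ⟨a, rfl⟩ : ∃ a, A = diagonal a := ⟨_, hA.diagonal_diag.symm⟩
  have hoff : B i j * a j = 0 := by
    simpa only [mul_diagonal, one_apply_ne hij] using congr($hBA i j)
  have hdiag : a j * B j j = 1 := by
    simpa only [diagonal_mul, one_apply_eq] using congr($hAB j j)
  calc B i j = B i j * a j * B j j := by rw [mul_assoc, hdiag, mul_one]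
    _ = 0 := by rw [hoff, zero_mul]

theorem IsDiag.mul_mul_of_mul_eq_one [DecidableEq n] [CommSemiring R] [Subsingleton (AddUnits R)]
    {A B D : Matrix n n R} (hD : D.IsDiag) (hAB : A * B = 1) : (A * D * B).IsDiag := by
  intro i j hij
  have hsum : ∑ k, A i k * B k j = 0 := by rw [← mul_apply, hAB, one_apply_ne hij]
  have hterm k : A i k * B k j = 0 := Finset.sum_eq_zero_iff.1 hsum k (Finset.mem_univ k)
  rw [← hD.diagonal_diag, mul_apply]
  refine Finset.sum_eq_zero fun k _ => ?_
  rw [mul_diagonal, mul_right_comm, hterm, zero_mul]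

variable (n R) [DecidableEq n]

def diagUnits [Semiring R] : Subgroup (Matrix n n R)ˣ where
  carrier := {A | (A : Matrix n n R).IsDiag}
  mul_mem' hA hB := IsDiag.mul hA hB
  one_mem' := isDiag_one
  inv_mem' {A} hA := IsDiag.of_mul_eq_one hA A.mul_inv A.inv_mul

instance diagUnits_normal [CommSemiring R] [Subsingleton (AddUnits R)] :
    (diagUnits n R).Normal :=
  ⟨fun _ hD A => IsDiag.mul_mul_of_mul_eq_one hD A.mul_inv⟩

end Matrix

/-- Over a commutative antiring, the invertible diagonal matrices form a normal subgroup of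
`GLₙ(S)` (the unit group of the matrix semiring); in particular, conjugating a diagonal matrix
by a permutation matrix yields a diagonal matrix. -/
theorem stmt_12 {S : Type*} [CommSemiring S]
    (hzs : ∀ a b : S, a + b = 0 → a = 0 ∧ b = 0)
    (n : ℕ) :
    (∃ H : Subgroup (Matrix (Fin n) (Fin n) S)ˣ,
      (∀ A : (Matrix (Fin n) (Fin n) S)ˣ, A ∈ H ↔ Matrix.IsDiag (A.val)) ∧
      H.Normal) ∧
    (∀ (σ : Equiv.Perm (Fin n)) (d : Fin n → S),
      Matrix.IsDiag
        (Equiv.Perm.permMatrix S σ * Matrix.diagonal d * (Equiv.Perm.permMatrix S σ)ᵀ)) := by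
  have := subsingleton_addUnits_of_add_eq_zero hzs
  refine ⟨⟨diagUnits (Fin n) S, fun _ => Iff.rfl, inferInstance⟩, fun σ d => ?_⟩
  refine (isDiag_diagonal d).mul_mul_of_mul_eq_one ?_
  rw [transpose_permMatrix, ← permMatrix_mul, inv_mul_cancel, permMatrix_one]
end

section
/- Let S be an entire commutative antiring with no nonzero nilpotent elements, and let A ∈ Mₙ(S) be nilpotent with nilpotency index h(A) (so A^{h(A)} = 0, A^{h(A)-1} ≠ 0). Then the longest path in the digraph D(A) has length exactly h(A) − 1. -/
/-!
Expanding `A ^ k` entrywise writes the sum of all its entries as the sum, over all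
walks `i₀ → i₁ → ⋯ → i_k` in `D(A)`, of the weights `A i₀ i₁ ⋯ A i_{k-1} i_k`. In a
zerosumfree semiring a finite sum vanishes exactly when every term does, so `A ^ k = 0` if
and only if every walk of length `k` has weight zero. Applied to `k = h(A)` and
`k = h(A) - 1` this gives both halves of the claim.
-/

open Finset

def ZeroSumFree (M : Type*) [Add M] [Zero M] : Prop :=
  ∀ a b : M, a + b = 0 → a = 0 ∧ b = 0

theorem Finset.sum_eq_zero_iff_of_zeroSumFree {α M : Type*} [AddCommMonoid M]
    (hzs : ZeroSumFree M) {s : Finset α} {g : α → M} :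
    ∑ x ∈ s, g x = 0 ↔ ∀ x ∈ s, g x = 0 := by
  classical
  exact ⟨fun h x hx => (hzs _ _ ((add_sum_erase s g hx).trans h)).1, sum_eq_zero⟩

namespace Matrix

variable {ι S : Type*} [Fintype ι] [DecidableEq ι] [CommSemiring S]

theorem sum_pow_apply_eq_sum_prod_cons (A : Matrix ι ι S) (k : ℕ) (i : ι) :
    ∑ j, (A ^ k) i j = ∑ f : Fin k → ι,
      ∏ t : Fin k, A ((Fin.cons i f : Fin (k + 1) → ι) t.castSucc)
        ((Fin.cons i f : Fin (k + 1) → ι) t.succ) := by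
  induction k generalizing i with
  | zero => simp [one_apply]
  | succ k ih =>
    have row_sum : ∑ j, (A ^ (k + 1)) i j = ∑ l, A i l * ∑ j, (A ^ k) l j := by
      simp only [pow_succ', mul_apply, mul_sum]
      exact sum_comm
    rw [row_sum, ← (Fin.consEquiv fun _ => ι).sum_comp, Fintype.sum_prod_type]
    refine sum_congr rfl fun l _ => ?_
    rw [ih l, mul_sum]
    refine sum_congr rfl fun f _ => ?_
    rw [Fin.prod_univ_succ]
    rfl

theorem sum_sum_pow_apply_eq_sum_prod (A : Matrix ι ι S) (k : ℕ) :
    ∑ i, ∑ j, (A ^ k) i j =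
      ∑ f : Fin (k + 1) → ι, ∏ t : Fin k, A (f t.castSucc) (f t.succ) := by
  rw [← (Fin.consEquiv fun _ => ι).sum_comp, Fintype.sum_prod_type]
  simp only [sum_pow_apply_eq_sum_prod_cons]
  rfl

theorem pow_eq_zero_iff_forall_prod_eq_zero (hzs : ZeroSumFree S) (A : Matrix ι ι S) (k : ℕ) :
    A ^ k = 0 ↔ ∀ f : Fin (k + 1) → ι, ∏ t : Fin k, A (f t.castSucc) (f t.succ) = 0 := by
  have entries : A ^ k = 0 ↔ ∑ i, ∑ j, (A ^ k) i j = 0 := by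
    simp only [sum_eq_zero_iff_of_zeroSumFree hzs, mem_univ, true_implies, ← ext_iff, zero_apply]
  rw [entries, sum_sum_pow_apply_eq_sum_prod, sum_eq_zero_iff_of_zeroSumFree hzs]
  simp only [mem_univ, true_implies]

end Matrix

theorem stmt_13_general {S : Type*} [CommSemiring S]
    (hzs : ∀ a b : S, a + b = 0 → a = 0 ∧ b = 0)
    (n m : ℕ) (A : Matrix (Fin n) (Fin n) S)
    (h0 : A ^ (m + 1) = 0) (h1 : A ^ m ≠ 0) :
    (∃ f : Fin (m + 1) → Fin n,
      ∏ t : Fin m, A (f t.castSucc) (f t.succ) ≠ 0) ∧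
    (∀ f : Fin (m + 2) → Fin n,
      ∏ t : Fin (m + 1), A (f t.castSucc) (f t.succ) = 0) := by
  refine ⟨?_, (Matrix.pow_eq_zero_iff_forall_prod_eq_zero hzs A (m + 1)).mp h0⟩
  simpa using mt (Matrix.pow_eq_zero_iff_forall_prod_eq_zero hzs A m).mpr h1

/-- Over an entire commutative antiring with no nonzero nilpotents, if `A` has nilpotency
index `m + 1` (i.e. `A^(m+1) = 0` and `A^m ≠ 0`), then the longest path in the digraph
`D(A)` has length exactly `m`: there is a path of length `m` and no path of length `m+1`. -/
theorem stmt_13 {S : Type*} [CommSemiring S]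
    (hzs : ∀ a b : S, a + b = 0 → a = 0 ∧ b = 0)
    (hent : ∀ a b : S, a * b = 0 → a = 0 ∨ b = 0)
    (hnil : ∀ a : S, IsNilpotent a → a = 0)
    (n m : ℕ) (A : Matrix (Fin n) (Fin n) S)
    (h0 : A ^ (m + 1) = 0) (h1 : A ^ m ≠ 0) :
    (∃ f : Fin (m + 1) → Fin n,
      ∏ t : Fin m, A (f t.castSucc) (f t.succ) ≠ 0) ∧
    (∀ f : Fin (m + 2) → Fin n,
      ∏ t : Fin (m + 1), A (f t.castSucc) (f t.succ) = 0) :=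
  stmt_13_general hzs n m A h0 h1
end

section
/- Let S be a finite entire commutative antiring with q elements. The number of nilpotent 2×2 matrices over S is 2q − 1. -/
section aux

variable {S : Type*} [CommSemiring S]

private lemma key_diag (A : Matrix (Fin 2) (Fin 2) S) (i j : Fin 2)
    (hsum : ∀ f : Fin 2 → S, ∑ x, f x = f i + f j) :
    ∀ k : ℕ, ∃ x, (A ^ (k + 1)) i i = A i i ^ (k + 1) + x := by
  intro k
  induction k with
  | zero => exact ⟨0, by simp⟩
  | succ n ih =>
    obtain ⟨x, hx⟩ := ih
    refine ⟨x * A i i + (A ^ (n + 1)) i j * A j i, ?_⟩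
    rw [pow_succ, Matrix.mul_apply, hsum, hx]
    ring

private lemma nilp_char [Fintype S]
    (hzs : ∀ a b : S, a + b = 0 → a = 0 ∧ b = 0)
    (hent : ∀ a b : S, a * b = 0 → a = 0 ∨ b = 0)
    (hnil : ∀ a : S, IsNilpotent a → a = 0)
    (A : Matrix (Fin 2) (Fin 2) S) (hA : IsNilpotent A) :
    A 0 0 = 0 ∧ A 1 1 = 0 ∧ (A 0 1 = 0 ∨ A 1 0 = 0) := by
  obtain ⟨k, hk⟩ := hA
  have hk1 : A ^ (k + 1) = 0 := by rw [pow_succ, hk, Matrix.zero_mul]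
  have hdiag : ∀ (i j : Fin 2), (∀ f : Fin 2 → S, ∑ x, f x = f i + f j) → A i i = 0 := by
    intro i j hsum
    obtain ⟨x, hx⟩ := key_diag A i j hsum k
    have : A i i ^ (k + 1) + x = 0 := by
      rw [← hx]; rw [hk1]; simp
    exact hnil _ ⟨k + 1, (hzs _ _ this).1⟩
  have h00 : A 0 0 = 0 := hdiag 0 1 (fun f => by simp [Fin.sum_univ_two])
  have h11 : A 1 1 = 0 := hdiag 1 0 (fun f => by simp [Fin.sum_univ_two, add_comm])
  refine ⟨h00, h11, ?_⟩
  have hsq : A ^ 2 = (A 0 1 * A 1 0) • (1 : Matrix (Fin 2) (Fin 2) S) := by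
    ext i j
    fin_cases i <;> fin_cases j <;>
      simp [pow_two, Matrix.mul_apply, Fin.sum_univ_two, h00, h11, Matrix.one_apply,
        mul_comm]
  have h2k : (A ^ 2) ^ (k + 1) = 0 := by
    rw [← pow_mul, mul_comm, pow_mul, hk1]
    simp
  rw [hsq, smul_pow, one_pow] at h2k
  have : (A 0 1 * A 1 0) ^ (k + 1) = 0 := by
    have := congrFun (congrFun h2k 0) 0
    simpa using this
  have := hnil _ ⟨k + 1, this⟩
  exact hent _ _ this

private lemma nilp_of (b c : S) (h : b * c = 0) :
    IsNilpotent (Matrix.of ![![0, b], ![c, 0]] : Matrix (Fin 2) (Fin 2) S) := by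
  refine ⟨2, ?_⟩
  ext i j
  fin_cases i <;> fin_cases j <;>
    simp [pow_two, Matrix.mul_apply, Fin.sum_univ_two, h, mul_comm b c ▸ h]

end aux

/-- Over a finite entire commutative antiring with `q` elements (and no nonzero nilpotent
elements), there are exactly `2q - 1` nilpotent `2 × 2` matrices. -/
theorem stmt_16 {S : Type*} [CommSemiring S] [Fintype S]
    (hzs : ∀ a b : S, a + b = 0 → a = 0 ∧ b = 0)
    (hent : ∀ a b : S, a * b = 0 → a = 0 ∨ b = 0)
    (hnil : ∀ a : S, IsNilpotent a → a = 0) :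
    Nat.card {A : Matrix (Fin 2) (Fin 2) S // IsNilpotent A} = 2 * Fintype.card S - 1 := by
  classical
  have e : {A : Matrix (Fin 2) (Fin 2) S // IsNilpotent A} ≃
      {p : S × S // p.1 = 0 ∨ p.2 = 0} := by
    refine
      { toFun := fun A => ⟨(A.1 0 1, A.1 1 0), (nilp_char hzs hent hnil A.1 A.2).2.2⟩
        invFun := fun p => ⟨Matrix.of ![![0, p.1.1], ![p.1.2, 0]], ?_⟩
        left_inv := ?_
        right_inv := ?_ }
    · rcases p.2 with h | h <;> apply nilp_of <;> simp [h]
    · rintro ⟨A, hA⟩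
      obtain ⟨h00, h11, -⟩ := nilp_char hzs hent hnil A hA
      ext i j
      fin_cases i <;> fin_cases j <;> simp [h00, h11]
    · rintro ⟨⟨b, c⟩, hp⟩
      simp
  rw [Nat.card_congr e, Nat.card_eq_fintype_card, Fintype.card_subtype]
  have hfilter : Finset.univ.filter (fun p : S × S => p.1 = 0 ∨ p.2 = 0) =
      (Finset.univ.filter (fun p : S × S => p.1 = 0)) ∪
      (Finset.univ.filter (fun p : S × S => p.2 = 0)) := by
    rw [← Finset.filter_or]
  have h1 : (Finset.univ.filter (fun p : S × S => p.1 = 0)).card = Fintype.card S := by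
    have : Finset.univ.filter (fun p : S × S => p.1 = 0) =
        ({(0 : S)} : Finset S) ×ˢ Finset.univ := by
      ext p; simp [Finset.mem_product, Prod.ext_iff, eq_comm]
    rw [this, Finset.card_product]
    simp
  have h2 : (Finset.univ.filter (fun p : S × S => p.2 = 0)).card = Fintype.card S := by
    have : Finset.univ.filter (fun p : S × S => p.2 = 0) =
        Finset.univ ×ˢ ({(0 : S)} : Finset S) := by
      ext p; simp [Finset.mem_product, Prod.ext_iff, eq_comm]
    rw [this, Finset.card_product]
    simp
  have hinter : ((Finset.univ.filter (fun p : S × S => p.1 = 0)) ∩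
      (Finset.univ.filter (fun p : S × S => p.2 = 0))).card = 1 := by
    have : (Finset.univ.filter (fun p : S × S => p.1 = 0)) ∩
        (Finset.univ.filter (fun p : S × S => p.2 = 0)) = {((0 : S), (0 : S))} := by
      ext p; simp [Prod.ext_iff, eq_comm]
    rw [this]; rfl
  have hcard := Finset.card_union_add_card_inter
    (Finset.univ.filter (fun p : S × S => p.1 = 0))
    (Finset.univ.filter (fun p : S × S => p.2 = 0))
  rw [h1, h2, hinter] at hcard
  have hq : 1 ≤ Fintype.card S := Fintype.card_pos
  rw [hfilter]
  omega
end

section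
/- Let S be a finite entire commutative antiring with q elements. The number of nilpotent 3×3 matrices over S is 6q³ − 6q² + 1. -/
set_option linter.unusedSectionVars false
set_option linter.unnecessarySeqFocus false
set_option linter.unusedVariables false
set_option maxHeartbeats 1600000

section StmtAux
variable {S : Type*} [CommSemiring S] [Fintype S]

private lemma walkL (A : Matrix (Fin 3) (Fin 3) S) (w : ℕ → Fin 3) :
    ∀ n, ∃ c, (A ^ n) (w 0) (w n) = (∏ t ∈ Finset.range n, A (w t) (w (t+1))) + c := by
  intro n
  induction n with
  | zero => exact ⟨0, by simp [Matrix.one_apply]⟩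
  | succ n ih =>
    obtain ⟨c, hc⟩ := ih
    refine ⟨c * A (w n) (w (n+1)) + ∑ k ∈ Finset.univ.erase (w n), (A ^ n) (w 0) k * A k (w (n+1)), ?_⟩
    rw [pow_succ, Matrix.mul_apply]
    rw [← Finset.add_sum_erase _ _ (Finset.mem_univ (w n))]
    rw [hc, Finset.prod_range_succ]
    ring

private lemma cyc (hzs : ∀ a b : S, a + b = 0 → a = 0 ∧ b = 0)
    (hent : ∀ a b : S, a * b = 0 → a = 0 ∨ b = 0)
    (A : Matrix (Fin 3) (Fin 3) S) (hA : IsNilpotent A)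
    (ℓ : ℕ) (hℓ : 0 < ℓ) (v : ℕ → Fin 3) (hv : ∀ t, v (t + ℓ) = v t) :
    ∃ t < ℓ, A (v t) (v (t + 1)) = 0 := by
  rcases subsingleton_or_nontrivial S with hS | hS
  · exact ⟨0, hℓ, Subsingleton.elim _ _⟩
  haveI : NoZeroDivisors S := ⟨fun {a b} h => hent a b h⟩
  obtain ⟨m, hm⟩ := hA
  set n := ℓ * (m + 1) with hn
  have hmn : m ≤ n := by
    have : m + 1 ≤ ℓ * (m + 1) := Nat.le_mul_of_pos_left _ hℓ
    omega
  have hpow : A ^ n = 0 := by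
    rw [show n = m + (n - m) by omega, pow_add, hm, zero_mul]
  have hper : ∀ k t, v (t + ℓ * k) = v t := by
    intro k
    induction k with
    | zero => simp
    | succ k ih =>
      intro t
      rw [show t + ℓ * (k+1) = (t + ℓ * k) + ℓ by ring, hv, ih]
  obtain ⟨c, hc⟩ := walkL A v n
  rw [hpow] at hc
  simp only [Matrix.zero_apply] at hc
  have hprod : (∏ t ∈ Finset.range n, A (v t) (v (t+1))) = 0 := (hzs _ _ hc.symm).1
  obtain ⟨t, ht, h0⟩ := Finset.prod_eq_zero_iff.mp hprod
  refine ⟨t % ℓ, Nat.mod_lt _ hℓ, ?_⟩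
  have h1 : v (t % ℓ) = v t := by
    have hmd := Nat.mod_add_div t ℓ
    conv_rhs => rw [show t = t % ℓ + ℓ * (t / ℓ) by omega, hper]
  have h2 : v (t % ℓ + 1) = v (t + 1) := by
    have hmd := Nat.mod_add_div t ℓ
    conv_rhs => rw [show t + 1 = (t % ℓ + 1) + ℓ * (t / ℓ) by omega, hper]
  rw [h1, h2]; exact h0

private def Pm (A : Matrix (Fin 3) (Fin 3) S) : Prop :=
  (∀ i, A i i = 0) ∧ (∀ i j, A i j = 0 ∨ A j i = 0) ∧
    (∀ i j k, A i j = 0 ∨ A j k = 0 ∨ A k i = 0)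

private lemma term0 (A : Matrix (Fin 3) (Fin 3) S) (hP : Pm A) :
    ∀ i k l j : Fin 3, A i k * A k l * A l j = 0 := by
  obtain ⟨h1, h2, h3⟩ := hP
  intro i k l j
  rcases eq_or_ne i k with rfl | hik
  · simp [h1]
  rcases eq_or_ne k l with rfl | hkl
  · simp [h1]
  rcases eq_or_ne l j with rfl | hlj
  · simp [h1]
  rcases eq_or_ne i l with rfl | hil
  · rcases h2 i k with h | h <;> simp [h]
  rcases eq_or_ne k j with rfl | hkj
  · rcases h2 k l with h | h <;> simp [h]
  have hij : j = i := by
    have b1 := i.isLt; have b2 := k.isLt; have b3 := l.isLt; have b4 := j.isLt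
    rw [Fin.ext_iff]
    simp only [ne_eq, Fin.ext_iff] at hik hkl hlj hil hkj
    omega
  subst hij
  rcases h3 j k l with h | h | h <;> simp [h]

private lemma nil_iff (hzs : ∀ a b : S, a + b = 0 → a = 0 ∧ b = 0)
    (hent : ∀ a b : S, a * b = 0 → a = 0 ∨ b = 0)
    (A : Matrix (Fin 3) (Fin 3) S) : IsNilpotent A ↔ Pm A := by
  constructor
  · intro hA
    refine ⟨fun i => ?_, fun i j => ?_, fun i j k => ?_⟩
    · obtain ⟨t, ht, h0⟩ := cyc hzs hent A hA 1 one_pos (fun _ => i) (fun _ => rfl)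
      exact h0
    · obtain ⟨t, ht, h0⟩ := cyc hzs hent A hA 2 two_pos
        (fun t => if t % 2 = 0 then i else j) (fun t => by simp [Nat.add_mod_right])
      interval_cases t
      · left; simpa using h0
      · right; simpa using h0
    · obtain ⟨t, ht, h0⟩ := cyc hzs hent A hA 3 three_pos
        (fun t => if t % 3 = 0 then i else if t % 3 = 1 then j else k)
        (fun t => by simp [Nat.add_mod_right])
      interval_cases t
      · left; simpa using h0
      · right; left; simpa using h0
      · right; right; simpa using h0
  · rintro hP
    refine ⟨3, ?_⟩
    have h3 : A ^ 3 = A * A * A := by rw [pow_succ, pow_succ, pow_one]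
    ext i j
    rw [h3, Matrix.mul_apply, Matrix.zero_apply]
    simp only [Matrix.mul_apply, Finset.sum_mul]
    exact Finset.sum_eq_zero fun l _ => Finset.sum_eq_zero fun k _ => term0 A hP i k l j

private def QP (a b c d e f : S) : Prop :=
  (a = 0 ∨ b = 0) ∧ (c = 0 ∨ d = 0) ∧ (e = 0 ∨ f = 0) ∧
    (a = 0 ∨ c = 0 ∨ e = 0) ∧ (b = 0 ∨ d = 0 ∨ f = 0)

private def Mv (a b c d e f : S) : Matrix (Fin 3) (Fin 3) S :=
  Matrix.of ![![0, a, f], ![b, 0, c], ![e, d, 0]]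

private def equivPQ : {A : Matrix (Fin 3) (Fin 3) S // Pm A} ≃
    {v : S × S × S × S × S × S // QP v.1 v.2.1 v.2.2.1 v.2.2.2.1 v.2.2.2.2.1 v.2.2.2.2.2} where
  toFun := fun ⟨A, hA⟩ => ⟨(A 0 1, A 1 0, A 1 2, A 2 1, A 2 0, A 0 2), by
    obtain ⟨h1, h2, h3⟩ := hA
    refine ⟨h2 0 1, h2 1 2, h2 2 0, h3 0 1 2, ?_⟩
    rcases h3 1 0 2 with h | h | h
    exacts [Or.inl h, Or.inr (Or.inr h), Or.inr (Or.inl h)]⟩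
  invFun := fun ⟨⟨a, b, c, d, e, f⟩, hv⟩ => ⟨Mv a b c d e f, by
    obtain ⟨q1, q2, q3, q4, q5⟩ := hv
    refine ⟨fun i => ?_, fun i j => ?_, fun i j k => ?_⟩
    · fin_cases i <;> simp [Mv]
    · fin_cases i <;> fin_cases j <;> simp [Mv] <;> tauto
    · fin_cases i <;> fin_cases j <;> fin_cases k <;> simp [Mv] <;> tauto⟩
  left_inv := fun ⟨A, hA⟩ => Subtype.ext (by
    ext i j
    fin_cases i <;> fin_cases j <;> simp [Mv, hA.1 0, hA.1 1, hA.1 2])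
  right_inv := fun ⟨⟨a, b, c, d, e, f⟩, hv⟩ => Subtype.ext (by simp [Mv])

private lemma L1 (g : S → ℕ) (k0 k1 : ℕ) (h0 : g 0 = k0) (h1 : ∀ x : S, x ≠ 0 → g x = k1) :
    ∑ x : S, g x = k0 + (Fintype.card S - 1) * k1 := by
  classical
  rw [← Finset.sum_filter_add_sum_filter_not Finset.univ (· = 0) g]
  have e0 : Finset.univ.filter (· = (0 : S)) = {(0 : S)} := by ext x; simp
  have e1 : (Finset.univ.filter (fun x : S => ¬ x = 0)).card = Fintype.card S - 1 := by
    have h := Finset.card_filter_add_card_filter_not (s := (Finset.univ : Finset S))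
      (p := (· = 0))
    rw [e0] at h
    simp only [Finset.card_singleton, Finset.card_univ] at h
    omega
  rw [e0, Finset.sum_singleton, h0,
    Finset.sum_congr rfl (fun x hx => h1 x (by simpa using (Finset.mem_filter.mp hx).2)),
    Finset.sum_const, e1, smul_eq_mul]

open scoped Classical in
private lemma countQ :
    (∑ a : S, ∑ b : S, ∑ c : S, ∑ d : S, ∑ e : S, ∑ f : S, if QP a b c d e f then 1 else 0)
      = 6 * Fintype.card S ^ 3 - 6 * Fintype.card S ^ 2 + 1 := by
  classical
  have hf : ∀ a b c d e : S,
      (∑ f : S, if QP a b c d e f then 1 else 0) =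
        (if (a = 0 ∨ b = 0) ∧ (c = 0 ∨ d = 0) ∧ (a = 0 ∨ c = 0 ∨ e = 0) then 1 else 0)
        + (Fintype.card S - 1) *
          (if (a = 0 ∨ b = 0) ∧ (c = 0 ∨ d = 0) ∧ e = 0 ∧ (b = 0 ∨ d = 0) then 1 else 0) := by
    intro a b c d e
    refine L1 _ _ _ ?_ ?_
    · by_cases hA : a = 0 <;> by_cases hB : b = 0 <;> by_cases hC : c = 0 <;>
        by_cases hD : d = 0 <;> by_cases hE : e = 0 <;> simp [QP, hA, hB, hC, hD, hE]
    · intro x hx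
      by_cases hA : a = 0 <;> by_cases hB : b = 0 <;> by_cases hC : c = 0 <;>
        by_cases hD : d = 0 <;> by_cases hE : e = 0 <;> simp [QP, hA, hB, hC, hD, hE, hx]
  have he : ∀ a b c d : S,
      (∑ e : S,
        ((if (a = 0 ∨ b = 0) ∧ (c = 0 ∨ d = 0) ∧ (a = 0 ∨ c = 0 ∨ e = 0) then 1 else 0)
        + (Fintype.card S - 1) *
          (if (a = 0 ∨ b = 0) ∧ (c = 0 ∨ d = 0) ∧ e = 0 ∧ (b = 0 ∨ d = 0) then 1 else 0))) =
      ((if (a = 0 ∨ b = 0) ∧ (c = 0 ∨ d = 0) then 1 else 0)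
        + (Fintype.card S - 1) *
          (if (a = 0 ∨ b = 0) ∧ (c = 0 ∨ d = 0) ∧ (b = 0 ∨ d = 0) then 1 else 0))
      + (Fintype.card S - 1) *
        (if (a = 0 ∨ b = 0) ∧ (c = 0 ∨ d = 0) ∧ (a = 0 ∨ c = 0) then 1 else 0) := by
    intro a b c d
    refine L1 _ _ _ ?_ ?_
    · by_cases hA : a = 0 <;> by_cases hB : b = 0 <;> by_cases hC : c = 0 <;>
        by_cases hD : d = 0 <;> simp [hA, hB, hC, hD]
    · intro x hx
      by_cases hA : a = 0 <;> by_cases hB : b = 0 <;> by_cases hC : c = 0 <;>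
        by_cases hD : d = 0 <;> simp [hA, hB, hC, hD, hx]
  have hd : ∀ a b c : S,
      (∑ d : S,
        (((if (a = 0 ∨ b = 0) ∧ (c = 0 ∨ d = 0) then 1 else 0)
        + (Fintype.card S - 1) *
          (if (a = 0 ∨ b = 0) ∧ (c = 0 ∨ d = 0) ∧ (b = 0 ∨ d = 0) then 1 else 0))
      + (Fintype.card S - 1) *
        (if (a = 0 ∨ b = 0) ∧ (c = 0 ∨ d = 0) ∧ (a = 0 ∨ c = 0) then 1 else 0))) =
      (((if (a = 0 ∨ b = 0) then 1 else 0)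
        + (Fintype.card S - 1) * (if (a = 0 ∨ b = 0) then 1 else 0))
      + (Fintype.card S - 1) * (if (a = 0 ∨ b = 0) ∧ (a = 0 ∨ c = 0) then 1 else 0))
      + (Fintype.card S - 1) *
      (((if (a = 0 ∨ b = 0) ∧ c = 0 then 1 else 0)
        + (Fintype.card S - 1) * (if b = 0 ∧ c = 0 then 1 else 0))
      + (Fintype.card S - 1) * (if (a = 0 ∨ b = 0) ∧ c = 0 then 1 else 0)) := by
    intro a b c
    refine L1 _ _ _ ?_ ?_
    · by_cases hA : a = 0 <;> by_cases hB : b = 0 <;> by_cases hC : c = 0 <;>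
        simp [hA, hB, hC]
    · intro x hx
      by_cases hA : a = 0 <;> by_cases hB : b = 0 <;> by_cases hC : c = 0 <;>
        simp [hA, hB, hC, hx]
  have hc : ∀ a b : S,
      (∑ c : S,
        ((((if (a = 0 ∨ b = 0) then 1 else 0)
        + (Fintype.card S - 1) * (if (a = 0 ∨ b = 0) then 1 else 0))
      + (Fintype.card S - 1) * (if (a = 0 ∨ b = 0) ∧ (a = 0 ∨ c = 0) then 1 else 0))
      + (Fintype.card S - 1) *
      (((if (a = 0 ∨ b = 0) ∧ c = 0 then 1 else 0)
        + (Fintype.card S - 1) * (if b = 0 ∧ c = 0 then 1 else 0))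
      + (Fintype.card S - 1) * (if (a = 0 ∨ b = 0) ∧ c = 0 then 1 else 0)))) =
      ((((if (a = 0 ∨ b = 0) then 1 else 0)
        + (Fintype.card S - 1) * (if (a = 0 ∨ b = 0) then 1 else 0))
      + (Fintype.card S - 1) * (if (a = 0 ∨ b = 0) then 1 else 0))
      + (Fintype.card S - 1) *
      (((if (a = 0 ∨ b = 0) then 1 else 0)
        + (Fintype.card S - 1) * (if b = 0 then 1 else 0))
      + (Fintype.card S - 1) * (if (a = 0 ∨ b = 0) then 1 else 0)))
      + (Fintype.card S - 1) *
      (((if (a = 0 ∨ b = 0) then 1 else 0)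
        + (Fintype.card S - 1) * (if (a = 0 ∨ b = 0) then 1 else 0))
      + (Fintype.card S - 1) * (if a = 0 then 1 else 0)) := by
    intro a b
    refine L1 _ _ _ ?_ ?_
    · by_cases hA : a = 0 <;> by_cases hB : b = 0 <;> simp [hA, hB]
    · intro x hx
      by_cases hA : a = 0 <;> by_cases hB : b = 0 <;> simp [hA, hB, hx]
  have hb : ∀ a : S,
      (∑ b : S,
        (((((if (a = 0 ∨ b = 0) then 1 else 0)
        + (Fintype.card S - 1) * (if (a = 0 ∨ b = 0) then 1 else 0))
      + (Fintype.card S - 1) * (if (a = 0 ∨ b = 0) then 1 else 0))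
      + (Fintype.card S - 1) *
      (((if (a = 0 ∨ b = 0) then 1 else 0)
        + (Fintype.card S - 1) * (if b = 0 then 1 else 0))
      + (Fintype.card S - 1) * (if (a = 0 ∨ b = 0) then 1 else 0)))
      + (Fintype.card S - 1) *
      (((if (a = 0 ∨ b = 0) then 1 else 0)
        + (Fintype.card S - 1) * (if (a = 0 ∨ b = 0) then 1 else 0))
      + (Fintype.card S - 1) * (if a = 0 then 1 else 0)))) =
      ((1 + 4 * (Fintype.card S - 1) + 3 * (Fintype.card S - 1) ^ 2)
        + (Fintype.card S - 1) ^ 2 * (if a = 0 then 1 else 0))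
      + (Fintype.card S - 1) *
        ((1 + 4 * (Fintype.card S - 1) + 3 * (Fintype.card S - 1) ^ 2)
          * (if a = 0 then 1 else 0)) := by
    intro a
    refine L1 _ _ _ ?_ ?_
    · by_cases hA : a = 0 <;> simp [hA] <;> ring
    · intro x hx
      by_cases hA : a = 0 <;> simp [hA, hx] <;> ring
  have ha :
      (∑ a : S,
        (((1 + 4 * (Fintype.card S - 1) + 3 * (Fintype.card S - 1) ^ 2)
        + (Fintype.card S - 1) ^ 2 * (if a = 0 then 1 else 0))
      + (Fintype.card S - 1) *
        ((1 + 4 * (Fintype.card S - 1) + 3 * (Fintype.card S - 1) ^ 2)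
          * (if a = 0 then 1 else 0)))) =
      (1 + 5 * (Fintype.card S - 1) + 8 * (Fintype.card S - 1) ^ 2
        + 3 * (Fintype.card S - 1) ^ 3)
      + (Fintype.card S - 1) *
        (1 + 4 * (Fintype.card S - 1) + 3 * (Fintype.card S - 1) ^ 2) := by
    refine L1 _ _ _ ?_ ?_
    · simp; ring
    · intro x hx; simp [hx]
  simp only [hf]
  simp only [he]
  simp only [hd]
  simp only [hc]
  simp only [hb]
  rw [ha]
  have hpos : 0 < Fintype.card S := Fintype.card_pos
  generalize hr : Fintype.card S - 1 = r
  rw [show Fintype.card S = r + 1 by omega]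
  have e1 : 6 * (r + 1) ^ 3 = (6 * r ^ 3 + 12 * r ^ 2 + 6 * r) + 6 * (r + 1) ^ 2 := by ring
  rw [e1, Nat.add_sub_cancel]
  ring

end StmtAux

/-- Over a finite entire commutative antiring with `q` elements (and no nonzero nilpotent
elements), there are exactly `6q³ - 6q² + 1` nilpotent `3 × 3` matrices. -/
theorem stmt_17 {S : Type*} [CommSemiring S] [Fintype S]
    (hzs : ∀ a b : S, a + b = 0 → a = 0 ∧ b = 0)
    (hent : ∀ a b : S, a * b = 0 → a = 0 ∨ b = 0)
    (hnil : ∀ a : S, IsNilpotent a → a = 0) :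
    Nat.card {A : Matrix (Fin 3) (Fin 3) S // IsNilpotent A} =
      6 * Fintype.card S ^ 3 - 6 * Fintype.card S ^ 2 + 1 := by
  classical
  rw [Nat.card_congr ((Equiv.subtypeEquivRight (nil_iff hzs hent)).trans equivPQ)]
  rw [Nat.card_eq_fintype_card, Fintype.card_subtype]
  rw [Finset.card_filter]
  simp only [Fintype.sum_prod_type]
  exact countQ
end

section
/- Let S be an entire commutative antiring with no nonzero nilpotent elements and let A be a nilpotent n×n matrix over S. Then A can be written as a sum of ⌈log₂ n⌉ matrices B₁,...,B_{⌈log₂ n⌉} over S, each satisfying Bᵢ² = 0. Moreover, for every n there exists a nilpotent A ∈ Mₙ(S) that cannot be written as a sum of fewer than ⌈log₂ n⌉ square-zero matrices. -/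
/-!
Label the vertices of the acyclic digraph `D(A)` by distinct numbers `τ i < n` increasing along
edges, and give the edge `i → j` the colour "highest bit in which `τ i` and `τ j` differ". Along a
path `i → j → k` we have `τ i < τ j < τ k`, so that bit is `1` in `τ j` for the first edge and `0`
in `τ j` for the second: no path of length two is monochromatic, and the `⌈log₂ n⌉` colour
classes of `A` are square-zero.

Conversely, let `A` be the strictly upper triangular all-ones matrix and `A = ∑ t < k, B t` with
`B t ^ 2 = 0`. Sending `v` to the set of colours `t` with an edge `u → v` of `B t` for some
`u < v` is injective: if `u < v` have the same set, the colour of an edge `u → v` also colours an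
edge `w → u`, a path of length two in one `B t`. Hence `n ≤ 2 ^ k`.
-/

open Finset

namespace Nat

theorem testBit_log2_xor_of_lt {x y : ℕ} (h : x < y) :
    x.testBit (x ^^^ y).log2 = false ∧ y.testBit (x ^^^ y).log2 = true := by
  set t := (x ^^^ y).log2
  have hxy : x ^^^ y ≠ 0 := by simpa using h.ne
  have top : (x ^^^ y).testBit t = true := testBit_log2 hxy
  have above : ∀ j, t < j → x.testBit j = y.testBit j := fun j hj => by
    have := testBit_lt_two_pow (lt_log2_self.trans_le (Nat.pow_le_pow_right two_pos hj))
    simpa [testBit_xor] using this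
  rw [testBit_xor] at top
  cases hx : x.testBit t <;> cases hy : y.testBit t <;> rw [hx, hy] at top
  · exact absurd top Bool.false_ne_true
  · exact ⟨rfl, rfl⟩
  · exact absurd (lt_of_testBit t hy hx fun j hj => (above j hj).symm) h.not_gt
  · exact absurd top Bool.false_ne_true

theorem log2_xor_ne_of_lt_of_lt {a b c : ℕ} (hab : a < b) (hbc : b < c) :
    (a ^^^ b).log2 ≠ (b ^^^ c).log2 := fun h => by
  have h₁ := (testBit_log2_xor_of_lt hab).2
  rw [h, (testBit_log2_xor_of_lt hbc).1] at h₁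
  exact Bool.false_ne_true h₁

theorem log2_xor_lt {x y k : ℕ} (hxy : x ≠ y) (hx : x < 2 ^ k) (hy : y < 2 ^ k) :
    (x ^^^ y).log2 < k :=
  (log2_lt (by simpa using hxy)).mpr (xor_lt_two_pow hx hy)

end Nat

theorem exists_lt_card_of_lt_imp_lt {ι α : Type*} [Fintype ι] [Preorder α] (ρ : ι → α) :
    ∃ τ : ι → ℕ, (∀ i, τ i < Fintype.card ι) ∧ ∀ i j, ρ i < ρ j → τ i < τ j := by
  classical
  refine ⟨fun i => #{k | ρ k < ρ i}, fun i => card_lt_univ_of_notMem (x := i) (by simp),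
    fun i j hij => card_lt_card ?_⟩
  refine (ssubset_iff_of_subset fun k hk => ?_).mpr ⟨i, by simpa using hij, by simp⟩
  simp only [mem_filter, mem_univ, true_and] at hk ⊢
  exact hk.trans hij

namespace Matrix

variable {S : Type*} [Semiring S]

theorem isNilpotent_of_lt_imp_lt {m : Type*} [Fintype m] [DecidableEq m] {A : Matrix m m S}
    (τ : m → ℕ) (hτ : ∀ i j, A i j ≠ 0 → τ i < τ j) : IsNilpotent A := by
  have walk : ∀ r i j, (A ^ r) i j ≠ 0 → τ i + r ≤ τ j := by
    intro r
    induction r with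
    | zero =>
      intro i j h
      obtain rfl : i = j := by_contra fun hij => h (by rw [pow_zero, one_apply_ne hij])
      simp
    | succ r ih =>
      intro i k h
      rw [pow_succ, mul_apply] at h
      obtain ⟨j, -, hj⟩ := exists_ne_zero_of_sum_ne_zero h
      have := ih i j (left_ne_zero_of_mul hj)
      have := hτ j k (right_ne_zero_of_mul hj)
      omega
  refine ⟨univ.sup τ + 1, ext fun i j => by_contra fun h => ?_⟩
  have := walk _ i j h
  have := le_sup (f := τ) (mem_univ j)
  omega

section Coloring

variable {n : Type*}

def colorClass (A : Matrix n n S) (c : n → n → ℕ) (t : ℕ) : Matrix n n S :=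
  of fun i j => if c i j = t then A i j else 0

theorem sum_colorClass {A : Matrix n n S} {c : n → n → ℕ} {k : ℕ}
    (hc : ∀ i j, A i j ≠ 0 → c i j < k) : ∑ t : Fin k, A.colorClass c t = A := by
  ext i j
  rw [sum_apply, Fin.sum_univ_eq_sum_range (fun t => A.colorClass c t i j)]
  simp only [colorClass, of_apply, sum_ite_eq, mem_range]
  by_cases h : A i j = 0
  · simp [h]
  · simp [hc i j h]

theorem colorClass_mul_self [Fintype n] {A : Matrix n n S} {c : n → n → ℕ}
    (hc : ∀ i j k, A i j ≠ 0 → A j k ≠ 0 → c i j ≠ c j k) (t : ℕ) :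
    A.colorClass c t * A.colorClass c t = 0 := by
  ext i k
  refine sum_eq_zero fun j _ => ?_
  simp only [colorClass, of_apply]
  split_ifs with h₁ h₂ <;> try simp
  by_contra hne
  exact hc i j k (left_ne_zero_of_mul hne) (right_ne_zero_of_mul hne) (h₁.trans h₂.symm)

end Coloring

section Antiring

-- Zerosumfree is encoded as "`0` is the only additive unit".
variable [Subsingleton (AddUnits S)] [NoZeroDivisors S] {l m n : Type*} [Fintype m]

theorem mul_apply_ne_zero_iff {A : Matrix l m S} {B : Matrix m n S} {i : l} {k : n} :
    (A * B) i k ≠ 0 ↔ ∃ j, A i j ≠ 0 ∧ B j k ≠ 0 := by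
  simp [mul_apply, Finset.sum_eq_zero_iff]

theorem mul_self_eq_zero_iff {B : Matrix m m S} :
    B * B = 0 ↔ ∀ i j k, B i j ≠ 0 → B j k = 0 := by
  rw [← ext_iff]
  refine ⟨fun h i j k hij => ?_, fun h i k => ?_⟩ <;> by_contra hne
  · exact mul_apply_ne_zero_iff.mpr ⟨j, hij, hne⟩ (h i k)
  · obtain ⟨j, hij, hjk⟩ := mul_apply_ne_zero_iff.mp hne
    exact hjk (h i j k hij)

theorem exists_lt_imp_lt_of_isNilpotent [Nontrivial S] [DecidableEq m] {A : Matrix m m S}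
    (hA : IsNilpotent A) : ∃ ρ : m → ℕ, ∀ i j, A i j ≠ 0 → ρ i < ρ j := by
  classical
  obtain ⟨N, hN⟩ := hA
  -- `ρ j` is the greatest length `< N` of a walk in `D(A)` ending at `j`.
  let ρ j := Nat.findGreatest (fun r => ∃ i, (A ^ r) i j ≠ 0) N
  have walk_to : ∀ j, ∃ i, (A ^ ρ j) i j ≠ 0 := fun j =>
    Nat.findGreatest_spec (P := fun r => ∃ i, (A ^ r) i j ≠ 0) (Nat.zero_le N) ⟨j, by simp⟩
  have lt_N : ∀ j, ρ j < N := fun j => (Nat.findGreatest_le N).lt_of_ne fun h => by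
    obtain ⟨i, hi⟩ := walk_to j
    exact hi (by rw [show ρ j = N from h, hN, zero_apply])
  refine ⟨ρ, fun i j hij => Nat.le_findGreatest (lt_N i) ?_⟩
  obtain ⟨k, hk⟩ := walk_to i
  exact ⟨k, by rw [pow_succ]; exact mul_apply_ne_zero_iff.mpr ⟨i, hk, hij⟩⟩

theorem exists_lt_card_of_isNilpotent [Nontrivial S] [DecidableEq m] {A : Matrix m m S}
    (hA : IsNilpotent A) :
    ∃ τ : m → ℕ, (∀ i, τ i < Fintype.card m) ∧ ∀ i j, A i j ≠ 0 → τ i < τ j := by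
  obtain ⟨ρ, hρ⟩ := exists_lt_imp_lt_of_isNilpotent hA
  obtain ⟨τ, hτ_lt, hτ⟩ := exists_lt_card_of_lt_imp_lt ρ
  exact ⟨τ, hτ_lt, fun i j hij => hτ i j (hρ i j hij)⟩

theorem exists_sum_mul_self_eq_zero_of_isNilpotent [Nontrivial S] [DecidableEq m]
    {A : Matrix m m S} (hA : IsNilpotent A) {k : ℕ} (hk : Fintype.card m ≤ 2 ^ k) :
    ∃ B : Fin k → Matrix m m S, (∀ t, B t * B t = 0) ∧ A = ∑ t, B t := by
  obtain ⟨τ, hτ_lt, hτ⟩ := exists_lt_card_of_isNilpotent hA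
  have hτ_pow i : τ i < 2 ^ k := (hτ_lt i).trans_le hk
  let c i j := (τ i ^^^ τ j).log2
  refine ⟨fun t => A.colorClass c t, fun t => colorClass_mul_self ?_ t, (sum_colorClass ?_).symm⟩
  · exact fun i j k hij hjk => Nat.log2_xor_ne_of_lt_of_lt (hτ i j hij) (hτ j k hjk)
  · exact fun i j hij => Nat.log2_xor_lt (hτ i j hij).ne (hτ_pow i) (hτ_pow j)

theorem card_le_two_pow_of_sum_mul_self_eq_zero [LinearOrder m] {A : Matrix m m S}
    (hA : ∀ i j, i < j → A i j ≠ 0) {k : ℕ} (B : Fin k → Matrix m m S)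
    (hB : ∀ t, B t * B t = 0) (hAB : A = ∑ t, B t) : Fintype.card m ≤ 2 ^ k := by
  classical
  let φ v : Finset (Fin k) := {t | ∃ u < v, B t u v ≠ 0}
  have hφ : Function.Injective φ := .of_lt_imp_ne fun u v huv heq => by
    obtain ⟨t, ht⟩ : ∃ t, B t u v ≠ 0 := by simpa [hAB, sum_apply] using hA u v huv
    have htu : t ∈ φ u := heq ▸ (by simpa [φ] using ⟨u, huv, ht⟩)
    obtain ⟨w, -, hw⟩ := by simpa [φ] using htu
    exact ht (mul_self_eq_zero_iff.mp (hB t) w u v hw)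
  simpa using Fintype.card_le_of_injective φ hφ

end Antiring

end Matrix

theorem stmt_19_general {S : Type*} [CommSemiring S] [Nontrivial S]
    (hzs : ∀ a b : S, a + b = 0 → a = 0 ∧ b = 0)
    (hent : ∀ a b : S, a * b = 0 → a = 0 ∨ b = 0)
    (n : ℕ) :
    (∀ A : Matrix (Fin n) (Fin n) S, IsNilpotent A →
      ∃ B : Fin (Nat.clog 2 n) → Matrix (Fin n) (Fin n) S,
        (∀ i, B i * B i = 0) ∧ A = ∑ i, B i) ∧
    (∃ A : Matrix (Fin n) (Fin n) S, IsNilpotent A ∧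
      ∀ k, k < Nat.clog 2 n → ∀ B : Fin k → Matrix (Fin n) (Fin n) S,
        (∀ i, B i * B i = 0) → A ≠ ∑ i, B i) := by
  have : Subsingleton (AddUnits S) := .addUnits_of_isAddUnit fun a ha => by
    obtain ⟨b, hab, -⟩ := isAddUnit_iff_exists.mp ha
    exact (hzs a b hab).1
  have : NoZeroDivisors S := ⟨fun h => hent _ _ h⟩
  let A : Matrix (Fin n) (Fin n) S := Matrix.of fun i j => if i < j then 1 else 0
  have hA i j : A i j ≠ 0 ↔ i < j := by by_cases h : i < j <;> simp [A, h]
  refine ⟨fun M hM => Matrix.exists_sum_mul_self_eq_zero_of_isNilpotent hM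
      (by simpa using Nat.le_pow_clog one_lt_two n),
    A, Matrix.isNilpotent_of_lt_imp_lt Fin.val fun i j h => (hA i j).mp h,
    fun k hk B hB hAB => hk.not_ge (Nat.clog_le_of_le_pow ?_)⟩
  simpa using Matrix.card_le_two_pow_of_sum_mul_self_eq_zero (fun i j => (hA i j).mpr) B hB hAB

/-- Over a nontrivial entire commutative antiring with no nonzero nilpotent elements, every
nilpotent `n × n` matrix is a sum of `⌈log₂ n⌉` square-zero matrices, and this bound is
sharp: some nilpotent matrix is not a sum of fewer square-zero matrices. -/
theorem stmt_19 {S : Type*} [CommSemiring S] [Nontrivial S]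
    (hzs : ∀ a b : S, a + b = 0 → a = 0 ∧ b = 0)
    (hent : ∀ a b : S, a * b = 0 → a = 0 ∨ b = 0)
    (hnil : ∀ a : S, IsNilpotent a → a = 0)
    (n : ℕ) :
    (∀ A : Matrix (Fin n) (Fin n) S, IsNilpotent A →
      ∃ B : Fin (Nat.clog 2 n) → Matrix (Fin n) (Fin n) S,
        (∀ i, B i * B i = 0) ∧ A = ∑ i, B i) ∧
    (∃ A : Matrix (Fin n) (Fin n) S, IsNilpotent A ∧
      ∀ k, k < Nat.clog 2 n → ∀ B : Fin k → Matrix (Fin n) (Fin n) S,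
        (∀ i, B i * B i = 0) → A ≠ ∑ i, B i) :=
  stmt_19_general hzs hent n
end
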